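/- arXiv:1901.07382 — 4 statements merged into one kernel-verified Lean document; each statement's English description precedes it below -/
import Mathlib

section
/- Let p, q be coprime complex polynomials with deg p > deg q, and let ζ₁, …, ζ_s be the distinct roots of p. Then there exists ε > 0 such that for every c with 0 < c < ε, the map sending each root ζ_i to the connected component of {z ∈ ℂ : |p(z)| < c·|q(z)|} containing it is a bijection from {ζ₁, …, ζ_s} onto the set of connected components of {z ∈ ℂ : |p(z)| < c·|q(z)|}. -/
/-!
Since `deg q < deg p`, the set `|p| < |q|` is bounded. Removing pairwise disjoint open
neighbourhoods of the roots of `p` from its closure leaves a compact set on which `p` does not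
vanish, so there `|p| ≥ ε|q|` for some `ε > 0`. Hence for `c < ε` the sublevel set `|p| < c|q|`
lies in the union of those neighbourhoods, and no component contains two roots. Conversely, a
component `U` containing no root carries the holomorphic function `q / p`, whose modulus is at
most `1 / c` on `∂U` but exceeds `1 / c` inside, against the maximum modulus principle.
-/

open Polynomial Set Bornology

theorem IsPreconnected.subset_of_pairwiseDisjoint {X ι : Type*} [TopologicalSpace X]
    {C : Set X} {I : Set ι} {V : ι → Set X} (hC : IsPreconnected C)
    (hV : ∀ i ∈ I, IsOpen (V i)) (hdisj : I.PairwiseDisjoint V) (hCV : C ⊆ ⋃ i ∈ I, V i)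
    {i : ι} (hi : i ∈ I) (hCi : (C ∩ V i).Nonempty) : C ⊆ V i := by
  have hcover : C ⊆ V i ∪ ⋃ j ∈ I \ {i}, V j := by
    intro x hx
    obtain ⟨j, hj, hxj⟩ := mem_iUnion₂.mp (hCV hx)
    rcases eq_or_ne j i with rfl | hji
    · exact Or.inl hxj
    · exact Or.inr (mem_biUnion ⟨hj, hji⟩ hxj)
  refine hC.subset_left_of_subset_union (hV i hi)
    (isOpen_biUnion fun j hj => hV j hj.1) ?_ hcover hCi
  exact disjoint_iUnion₂_right.mpr fun j hj => hdisj hi hj.1 (Ne.symm hj.2)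

theorem injOn_connectedComponentIn_of_pairwiseDisjoint {X : Type*} [TopologicalSpace X]
    {S Z : Set X} {V : X → Set X} (hV : ∀ x ∈ Z, IsOpen (V x)) (hmem : ∀ x ∈ Z, x ∈ V x)
    (hdisj : Z.PairwiseDisjoint V) (hZS : Z ⊆ S) (hSV : S ⊆ ⋃ x ∈ Z, V x) :
    InjOn (connectedComponentIn S) Z := by
  intro x hx y hy hxy
  have hsub : connectedComponentIn S x ⊆ V x :=
    isPreconnected_connectedComponentIn.subset_of_pairwiseDisjoint hV hdisj
      ((connectedComponentIn_subset S x).trans hSV) hx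
      ⟨x, mem_connectedComponentIn (hZS hx), hmem x hx⟩
  have hyx : y ∈ V x := hsub (hxy ▸ mem_connectedComponentIn (hZS hy))
  exact hdisj.elim_set hx hy y hyx (hmem y hy)

theorem closure_connectedComponentIn_inter_subset {X : Type*} [TopologicalSpace X]
    (S : Set X) (x : X) : closure (connectedComponentIn S x) ∩ S ⊆ connectedComponentIn S x := by
  rintro w ⟨hwU, hwS⟩
  by_cases hx : x ∈ S
  · have hpre : IsPreconnected (insert w (connectedComponentIn S x)) :=
      isPreconnected_connectedComponentIn.subset_closure (subset_insert _ _)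
        (insert_subset hwU subset_closure)
    exact hpre.subset_connectedComponentIn (mem_insert_of_mem _ (mem_connectedComponentIn hx))
      (insert_subset hwS (connectedComponentIn_subset S x)) (mem_insert w _)
  · simp [connectedComponentIn_eq_empty hx] at hwU

theorem IsOpen.notMem_of_mem_frontier_connectedComponentIn {X : Type*} [TopologicalSpace X]
    [LocallyConnectedSpace X] {S : Set X} (hS : IsOpen S) {x w : X}
    (hw : w ∈ frontier (connectedComponentIn S x)) : w ∉ S := by
  rw [hS.connectedComponentIn.frontier_eq] at hw
  exact fun hwS => hw.2 (closure_connectedComponentIn_inter_subset S x ⟨hw.1, hwS⟩)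

theorem IsCompact.exists_pos_forall_mul_norm_le_norm {X E F : Type*} [TopologicalSpace X]
    [NormedAddCommGroup E] [NormedAddCommGroup F] {K : Set X} (hK : IsCompact K) {f : X → E}
    {g : X → F} (hf : ContinuousOn f K) (hg : ContinuousOn g K) (hf0 : ∀ x ∈ K, f x ≠ 0) :
    ∃ ε > 0, ∀ x ∈ K, ε * ‖g x‖ ≤ ‖f x‖ := by
  obtain ⟨m, hm, hmf⟩ := hK.exists_forall_le' hf.norm fun x hx => norm_pos_iff.mpr (hf0 x hx)
  obtain ⟨M, hM⟩ := hK.exists_bound_of_continuousOn hg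
  have hM1 : 0 < max M 1 := lt_max_of_lt_right one_pos
  refine ⟨m / max M 1, div_pos hm hM1, fun x hx => ?_⟩
  calc m / max M 1 * ‖g x‖ ≤ m / max M 1 * max M 1 :=
        mul_le_mul_of_nonneg_left ((hM x hx).trans (le_max_left M 1)) (div_pos hm hM1).le
    _ = m := div_mul_cancel₀ m hM1.ne'
    _ ≤ ‖f x‖ := hmf x hx

section NormRatioSublevel

variable {X E F : Type*} {f : X → E} {g : X → F} {c : ℝ}

theorem setOf_norm_lt_mul_subset_of_le_one [NormedAddCommGroup E] [NormedAddCommGroup F]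
    (hc : c ≤ 1) : {x | ‖f x‖ < c * ‖g x‖} ⊆ {x | ‖f x‖ < ‖g x‖} :=
  fun _ hx => hx.trans_le (mul_le_of_le_one_left (norm_nonneg _) hc)

theorem exists_pos_forall_setOf_norm_lt_mul_subset [PseudoMetricSpace X] [ProperSpace X]
    [NormedAddCommGroup E] [NormedAddCommGroup F] (hf : Continuous f) (hg : Continuous g)
    (hbdd : IsBounded {x | ‖f x‖ < ‖g x‖}) {W : Set X} (hW : IsOpen W)
    (hfW : {x | f x = 0} ⊆ W) : ∃ ε > 0, ∀ c < ε, {x | ‖f x‖ < c * ‖g x‖} ⊆ W := by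
  have hK : IsCompact (closure {x | ‖f x‖ < ‖g x‖} \ W) := hbdd.isCompact_closure.diff hW
  obtain ⟨ε, hε, hεK⟩ := hK.exists_pos_forall_mul_norm_le_norm hf.continuousOn
    hg.continuousOn fun x hx hfx => hx.2 (hfW hfx)
  refine ⟨min ε 1, lt_min hε one_pos, fun c hc x hx => ?_⟩
  by_contra hxW
  have hxK : x ∈ closure {x | ‖f x‖ < ‖g x‖} \ W :=
    ⟨subset_closure (setOf_norm_lt_mul_subset_of_le_one (hc.le.trans (min_le_right ε 1)) hx),
      hxW⟩
  have hcε : c * ‖g x‖ ≤ ε * ‖g x‖ :=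
    mul_le_mul_of_nonneg_right (hc.le.trans (min_le_left ε 1)) (norm_nonneg _)
  exact (hx.trans_le (hcε.trans (hεK x hxK))).false

end NormRatioSublevel

theorem exists_eq_zero_mem_connectedComponentIn_setOf_norm_lt_mul {E : Type*}
    [NormedAddCommGroup E] [NormedSpace ℂ E] [Nontrivial E] {f g : E → ℂ}
    (hf : Differentiable ℂ f) (hg : Differentiable ℂ g) (hfg : ∀ z, f z = 0 → g z ≠ 0) {c : ℝ}
    (hbdd : IsBounded {z | ‖f z‖ < c * ‖g z‖}) {z₀ : E} (hz₀ : ‖f z₀‖ < c * ‖g z₀‖) :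
    ∃ w ∈ connectedComponentIn {z | ‖f z‖ < c * ‖g z‖} z₀, f w = 0 := by
  set S := {z | ‖f z‖ < c * ‖g z‖}
  set U := connectedComponentIn S z₀
  by_contra! hU
  have hc : 0 < c := pos_of_mul_pos_left ((norm_nonneg _).trans_lt hz₀) (norm_nonneg _)
  have hS : IsOpen S := isOpen_lt hf.continuous.norm (continuous_const.mul hg.continuous.norm)
  have hfrontier : ∀ w ∈ frontier U, c * ‖g w‖ ≤ ‖f w‖ := fun w hw =>
    not_lt.mp (hS.notMem_of_mem_frontier_connectedComponentIn hw)
  have hf0 : ∀ w ∈ closure U, f w ≠ 0 := by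
    intro w hw hfw
    rw [closure_eq_self_union_frontier] at hw
    rcases hw with hw | hw
    · exact hU w hw hfw
    · have hw' := hfrontier w hw
      rw [hfw, norm_zero] at hw'
      exact (mul_pos hc (norm_pos_iff.mpr (hfg w hfw))).not_ge hw'
  have hdiff : DiffContOnCl ℂ (fun z => g z * (f z)⁻¹) U :=
    ⟨fun z hz => ((hg z).mul ((hf z).inv (hf0 z (subset_closure hz)))).differentiableWithinAt,
      hg.continuous.continuousOn.div hf.continuous.continuousOn hf0⟩
  have hratio : ∀ w, f w ≠ 0 → (‖g w * (f w)⁻¹‖ ≤ c⁻¹ ↔ c * ‖g w‖ ≤ ‖f w‖) := fun w hw => by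
    rw [norm_mul, norm_inv, ← div_eq_mul_inv, div_le_iff₀ (norm_pos_iff.mpr hw),
      le_inv_mul_iff₀ hc]
  have hz₀U : z₀ ∈ U := mem_connectedComponentIn hz₀
  have hle : ‖g z₀ * (f z₀)⁻¹‖ ≤ c⁻¹ :=
    Complex.norm_le_of_forall_mem_frontier_norm_le
      (hbdd.subset (connectedComponentIn_subset S z₀)) hdiff
      (fun w hw => (hratio w (hf0 w (frontier_subset_closure hw))).mpr (hfrontier w hw))
      (subset_closure hz₀U)
  exact ((hratio z₀ (hU z₀ hz₀U)).mp hle).not_gt hz₀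

theorem exists_pos_forall_bijOn_connectedComponentIn_setOf_norm_lt_mul {f g : ℂ → ℂ}
    (hf : Differentiable ℂ f) (hg : Differentiable ℂ g) (hfg : ∀ z, f z = 0 → g z ≠ 0)
    (hZ : {z | f z = 0}.Finite) (hbdd : IsBounded {z | ‖f z‖ < ‖g z‖}) :
    ∃ ε > (0 : ℝ), ∀ c : ℝ, 0 < c → c < ε →
      BijOn (connectedComponentIn {z | ‖f z‖ < c * ‖g z‖}) {z | f z = 0}
        {U | ∃ z ∈ {z | ‖f z‖ < c * ‖g z‖},
          U = connectedComponentIn {z | ‖f z‖ < c * ‖g z‖} z} := by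
  obtain ⟨V, hV, hdisj⟩ := hZ.t2_separation
  obtain ⟨ε, hε, hεW⟩ := exists_pos_forall_setOf_norm_lt_mul_subset hf.continuous hg.continuous
    hbdd (isOpen_biUnion fun ζ _ => (hV ζ).2) fun ζ hζ => mem_biUnion hζ (hV ζ).1
  refine ⟨min ε 1, lt_min hε one_pos, fun c hc hcε => ?_⟩
  have hZS : {z | f z = 0} ⊆ {z | ‖f z‖ < c * ‖g z‖} := fun ζ hζ => by
    simpa [show f ζ = 0 from hζ] using mul_pos hc (norm_pos_iff.mpr (hfg ζ hζ))
  refine ⟨fun ζ hζ => ⟨ζ, hZS hζ, rfl⟩, ?_, ?_⟩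
  · exact injOn_connectedComponentIn_of_pairwiseDisjoint (fun ζ _ => (hV ζ).2)
      (fun ζ _ => (hV ζ).1) hdisj hZS (hεW c (hcε.trans_le (min_le_left ε 1)))
  · rintro U ⟨z, hz, rfl⟩
    obtain ⟨w, hwU, hw⟩ := exists_eq_zero_mem_connectedComponentIn_setOf_norm_lt_mul hf hg hfg
      (hbdd.subset (setOf_norm_lt_mul_subset_of_le_one (hcε.le.trans (min_le_right ε 1)))) hz
    exact ⟨w, hw, (connectedComponentIn_eq hwU).symm⟩

theorem Polynomial.isBounded_setOf_norm_eval_lt {R : Type*} [NormedRing R] [NormMulClass R]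
    {p q : R[X]} (h : q.degree < p.degree) : IsBounded {z | ‖p.eval z‖ < ‖q.eval z‖} := by
  rw [isBounded_def]
  filter_upwards [(isLittleO_cobounded_of_degree_lt h).def one_pos] with z hz
  simpa using hz

/-- Let `p, q` be coprime complex polynomials with `deg p > deg q`, and let
`ζ₁, …, ζ_s` be the distinct roots of `p`.  Then there is `ε > 0` such that for
every `0 < c < ε`, sending each root of `p` to the connected component of
`{z : |p(z)| < c·|q(z)|}` containing it is a bijection from the set of roots of
`p` onto the set of connected components of `{z : |p(z)| < c·|q(z)|}`. -/
theorem components_of_small_rational_sublevel_biject_with_zeros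
    (p q : Polynomial ℂ) (hpq : IsCoprime p q) (hdeg : q.natDegree < p.natDegree) :
    ∃ ε > (0 : ℝ), ∀ c : ℝ, 0 < c → c < ε →
      Set.BijOn
        (fun ζ => connectedComponentIn
          {z : ℂ | ‖p.eval z‖ < c * ‖q.eval z‖} ζ)
        {ζ : ℂ | p.eval ζ = 0}
        {U : Set ℂ | ∃ z ∈ {z : ℂ | ‖p.eval z‖ < c * ‖q.eval z‖},
          U = connectedComponentIn
            {z : ℂ | ‖p.eval z‖ < c * ‖q.eval z‖} z} := by
  have hp : p ≠ 0 := ne_zero_of_natDegree_gt hdeg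
  have hpq0 : ∀ z, p.eval z = 0 → q.eval z ≠ 0 := fun z hpz hqz => by
    simpa [hpz, hqz] using aeval_ne_zero_of_isCoprime hpq z
  exact exists_pos_forall_bijOn_connectedComponentIn_setOf_norm_lt_mul p.differentiable
    q.differentiable hpq0 (finite_setOfPred_isRoot hp)
    (isBounded_setOf_norm_eval_lt (degree_lt_degree hdeg))
end

section
/- Let p, q be coprime complex polynomials with deg p > deg q ≥ 1, and let b₁, …, b_t be the distinct roots of q. Then there exists C > 0 such that for every c > C, the set {z ∈ ℂ : |p(z)| > c·|q(z)|} has exactly t + 1 connected components: exactly one unbounded component, and t bounded components each containing exactly one of the roots b₁, …, b_t. -/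
/-!
For large `c` the set `S_c = {c‖q‖ < ‖p‖}` hugs the poles of `p / q`. It contains every root of
`q`, and it contains a neighbourhood of `∞` because `deg q < deg p`. On a small circle around a
root of `q` that encloses no other root, `‖p / q‖` is bounded, so once `c` exceeds that bound the
circle misses `S_c` and traps the component of the root inside the disc. The neighbourhood of `∞`
is connected, so it lies in one unbounded component, and every unbounded component meets it
since its complement is bounded.
Finally a bounded component `U` containing no root of `q` is impossible: `p / q` is holomorphic
on `closure U`, with `‖p / q‖ > c` in `U` but `‖p / q‖ ≤ c` on `frontier U`, contradicting the
maximum modulus principle.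
-/

open Polynomial Filter Metric Set Bornology

theorem IsCompact.exists_forall_norm_le_mul_norm {X F G : Type*} [TopologicalSpace X]
    [SeminormedAddCommGroup F] [NormedAddCommGroup G] {K : Set X} (hK : IsCompact K)
    {f : X → F} {g : X → G} (hf : ContinuousOn f K) (hg : ContinuousOn g K)
    (hg0 : ∀ z ∈ K, g z ≠ 0) : ∃ C, ∀ z ∈ K, ‖f z‖ ≤ C * ‖g z‖ := by
  obtain ⟨C, hC⟩ := hK.exists_bound_of_continuousOn
    (hf.norm.div hg.norm fun z hz => norm_ne_zero_iff.2 (hg0 z hz))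
  refine ⟨C, fun z hz => ?_⟩
  have hgz : 0 < ‖g z‖ := norm_pos_iff.2 (hg0 z hz)
  rw [← div_le_iff₀ hgz]
  exact (le_abs_self _).trans (hC z hz)

theorem mem_connectedComponentIn_of_mem_closure {X : Type*} [TopologicalSpace X] {S : Set X}
    {x z : X} (hx : x ∈ closure (connectedComponentIn S z)) (hxS : x ∈ S) :
    x ∈ connectedComponentIn S z := by
  have hz : z ∈ S := by
    by_contra hz
    simp [connectedComponentIn_eq_empty hz] at hx
  have hins : IsPreconnected (insert x (connectedComponentIn S z)) :=
    isPreconnected_connectedComponentIn.subset_closure (subset_insert _ _)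
      (insert_subset hx subset_closure)
  exact hins.subset_connectedComponentIn (mem_insert_of_mem _ (mem_connectedComponentIn hz))
    (insert_subset hxS (connectedComponentIn_subset _ _)) (mem_insert _ _)

section RealNormed

variable {E : Type*} [NormedAddCommGroup E] [NormedSpace ℝ E]

theorem isPreconnected_compl_closedBall (h : 1 < Module.rank ℝ E) (x : E) {r : ℝ} (hr : 0 ≤ r) :
    IsPreconnected (closedBall x r)ᶜ := by
  have : (closedBall x r)ᶜ = (fun p : E × ℝ => x + p.2 • p.1) '' (sphere 0 1 ×ˢ Ioi r) := by
    ext z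
    simp only [mem_compl_iff, mem_closedBall, not_le, mem_image, mem_prod, mem_sphere_zero_iff_norm,
      mem_Ioi, Prod.exists]
    constructor
    · intro hz
      have hzx : 0 < ‖z - x‖ := by rw [← dist_eq_norm]; linarith
      refine ⟨‖z - x‖⁻¹ • (z - x), ‖z - x‖, ⟨?_, by rwa [← dist_eq_norm]⟩, ?_⟩
      · rw [norm_smul, norm_inv, norm_norm, inv_mul_cancel₀ hzx.ne']
      · rw [smul_smul, mul_inv_cancel₀ hzx.ne', one_smul, add_sub_cancel]
    · rintro ⟨u, t, ⟨hu, ht⟩, rfl⟩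
      rw [dist_eq_norm, add_sub_cancel_left, norm_smul, hu, mul_one,
        Real.norm_of_nonneg (by linarith)]
      exact ht
  rw [this]
  exact ((isPreconnected_sphere h 0 1).prod isPreconnected_Ioi).image _ (by fun_prop)

theorem existsUnique_not_isBounded_connectedComponentIn (h : 1 < Module.rank ℝ E) {S : Set E}
    (hS : S ∈ cobounded E) :
    ∃! U : Set E, (∃ z ∈ S, U = connectedComponentIn S z) ∧ ¬IsBounded U := by
  have : Nontrivial E := rank_pos_iff_nontrivial.1 (zero_lt_one.trans h)
  obtain ⟨R, -, hRS⟩ := (hasBasis_cobounded_compl_closedBall (0 : E)).mem_iff.1 hS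
  set T := (closedBall (0 : E) (max R 0))ᶜ
  have hTS : T ⊆ S :=
    (compl_subset_compl.2 (closedBall_subset_closedBall (le_max_left R 0))).trans hRS
  have hT_sub : ∀ z ∈ T, T ⊆ connectedComponentIn S z := fun z hz =>
    (isPreconnected_compl_closedBall h 0 (le_max_right R 0)).subset_connectedComponentIn hz hTS
  have hT_unbdd : ¬IsBounded T := fun hb =>
    NormedSpace.unbounded_univ ℝ E ((isBounded_closedBall.union hb).subset (union_compl_self _).ge)
  obtain ⟨a, haT⟩ : T.Nonempty := nonempty_of_not_isBounded hT_unbdd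
  refine ⟨connectedComponentIn S a,
    ⟨⟨a, hTS haT, rfl⟩, fun hb => hT_unbdd (hb.subset (hT_sub a haT))⟩, ?_⟩
  rintro _ ⟨⟨z, -, rfl⟩, hz⟩
  obtain ⟨w, hwz, hwT⟩ : (connectedComponentIn S z ∩ T).Nonempty := by
    by_contra! hempty
    exact hz (isBounded_closedBall.subset fun w hw =>
      not_not.1 fun hwT => hempty.subset ⟨hw, hwT⟩)
  rw [connectedComponentIn_eq hwz]
  exact connectedComponentIn_eq (hT_sub w hwT haT)

end RealNormed

section Superlevel

variable {X F G : Type*} [MetricSpace X] [ProperSpace X] [SeminormedAddCommGroup F]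
  [NormedAddCommGroup G] {f : X → F} {g : X → G}

theorem eventually_connectedComponentIn_subset_ball (hf : Continuous f) (hg : Continuous g)
    {x : X} {r : ℝ} (hr : 0 < r) (hg0 : ∀ z ∈ sphere x r, g z ≠ 0) :
    ∀ᶠ c in atTop, connectedComponentIn {z | c * ‖g z‖ < ‖f z‖} x ⊆ ball x r := by
  obtain ⟨C, hC⟩ := (isCompact_sphere x r).exists_forall_norm_le_mul_norm hf.continuousOn
    hg.continuousOn hg0
  filter_upwards [eventually_ge_atTop C] with c hc
  set S := {z | c * ‖g z‖ < ‖f z‖}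
  by_cases hx : x ∈ S
  swap
  · rw [connectedComponentIn_eq_empty hx]
    exact empty_subset _
  refine isPreconnected_connectedComponentIn.subset_of_closure_inter_subset isOpen_ball
    ⟨x, mem_connectedComponentIn hx, mem_ball_self hr⟩ fun z ⟨hz, hz_comp⟩ => ?_
  by_contra hzr
  have hz_sphere : z ∈ sphere x r :=
    le_antisymm (closure_ball_subset_closedBall hz) (not_lt.1 hzr)
  have hzS : c * ‖g z‖ < ‖f z‖ := connectedComponentIn_subset S x hz_comp
  linarith [hC z hz_sphere, mul_le_mul_of_nonneg_right hc (norm_nonneg (g z))]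

theorem eventually_connectedComponentIn_isBounded_and_zero_eq (hf : Continuous f)
    (hg : Continuous g) (hZ : {z | g z = 0}.Finite) {x : X} (hx : g x = 0) :
    ∀ᶠ c in atTop, IsBounded (connectedComponentIn {z | c * ‖g z‖ < ‖f z‖} x) ∧
      ∀ z ∈ connectedComponentIn {z | c * ‖g z‖ < ‖f z‖} x, g z = 0 → z = x := by
  obtain ⟨r, hr, hball⟩ := exists_ball_inter_eq_singleton_of_mem_discrete hZ.isDiscrete hx
  have hzero : ∀ z ∈ ball x r, g z = 0 → z = x := fun z hz hgz =>
    hball.subset (mem_inter hz hgz)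
  have hsphere : ∀ z ∈ sphere x (r / 2), g z ≠ 0 := by
    intro z hz hgz
    have hzx := hzero z (sphere_subset_ball (half_lt_self hr) hz) hgz
    rw [hzx, mem_sphere, dist_self] at hz
    linarith
  filter_upwards [eventually_connectedComponentIn_subset_ball hf hg (half_pos hr) hsphere]
    with c hc
  exact ⟨isBounded_ball.subset hc,
    fun z hz => hzero z (ball_subset_ball (half_le_self hr.le) (hc hz))⟩

end Superlevel

theorem exists_zero_mem_connectedComponentIn_of_isBounded {f g : ℂ → ℂ} (hf : Differentiable ℂ f)
    (hg : Differentiable ℂ g) (hfg : ∀ z, g z = 0 → f z ≠ 0) {c : ℝ} {x : ℂ}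
    (hx : c * ‖g x‖ < ‖f x‖) (hb : IsBounded (connectedComponentIn {z | c * ‖g z‖ < ‖f z‖} x)) :
    ∃ z ∈ connectedComponentIn {z | c * ‖g z‖ < ‖f z‖} x, g z = 0 := by
  set S := {z | c * ‖g z‖ < ‖f z‖}
  set U := connectedComponentIn S x
  by_contra! hU
  have hS_open : IsOpen S := isOpen_lt (continuous_const.mul hg.continuous.norm) hf.continuous.norm
  have hU_open : IsOpen U := hS_open.connectedComponentIn
  have hxU : x ∈ U := mem_connectedComponentIn hx
  have hfrontier : ∀ z ∈ frontier U, ‖f z‖ ≤ c * ‖g z‖ := fun z hz => not_lt.1 fun hzS =>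
    (hU_open.frontier_eq ▸ hz).2 (mem_connectedComponentIn_of_mem_closure hz.1 hzS)
  have hg_closure : ∀ z ∈ closure U, g z ≠ 0 := by
    intro z hz hgz
    rcases (closure_eq_self_union_frontier U ▸ hz) with hz | hz
    · exact hU z hz hgz
    · exact hfg z hgz (norm_le_zero_iff.1 (by simpa [hgz] using hfrontier z hz))
  have hd : DiffContOnCl ℂ (fun z => f z * (g z)⁻¹) U :=
    ⟨fun z hz => ((hf z).mul ((hg z).inv (hU z hz))).differentiableWithinAt,
      hf.continuous.continuousOn.mul (hg.continuous.continuousOn.inv₀ hg_closure)⟩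
  obtain ⟨w, hw, hmax⟩ := Complex.exists_mem_frontier_isMaxOn_norm hb ⟨x, hxU⟩ hd
  have hx_le_w : ‖f x‖ / ‖g x‖ ≤ ‖f w‖ / ‖g w‖ := by
    simpa [div_eq_mul_inv] using hmax (subset_closure hxU)
  have hw_le : ‖f w‖ / ‖g w‖ ≤ c :=
    (div_le_iff₀ (norm_pos_iff.2 (hg_closure w hw.1))).2 (hfrontier w hw)
  have hlt_x : c < ‖f x‖ / ‖g x‖ := (lt_div_iff₀ (norm_pos_iff.2 (hU x hxU))).2 hx
  linarith

theorem Polynomial.eventually_cobounded_mul_norm_eval_lt {𝕜 : Type*} [NormedField 𝕜]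
    {p q : 𝕜[X]} (hpq : q.degree < p.degree) (c : ℝ) :
    ∀ᶠ z in cobounded 𝕜, c * ‖q.eval z‖ < ‖p.eval z‖ := by
  have hp_ne : ∀ᶠ z in cobounded 𝕜, p.eval z ≠ 0 :=
    isBounded_def.1 (p.finite_setOfPred_isRoot (ne_zero_of_degree_gt hpq)).isBounded
  filter_upwards [(isLittleO_cobounded_of_degree_lt hpq).bound (by positivity : 0 < (|c| + 1)⁻¹),
    hp_ne] with z hqp hpz
  replace hpz : 0 < ‖p.eval z‖ := norm_pos_iff.2 hpz
  calc c * ‖q.eval z‖ ≤ |c| * ((|c| + 1)⁻¹ * ‖p.eval z‖) :=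
        mul_le_mul (le_abs_self c) hqp (norm_nonneg _) (abs_nonneg c)
    _ = |c| / (|c| + 1) * ‖p.eval z‖ := by ring
    _ < ‖p.eval z‖ := by
        apply mul_lt_of_lt_one_left hpz
        rw [div_lt_one (by positivity)]; linarith

theorem components_of_large_rational_superlevel_general
    (p q : Polynomial ℂ) (hpq : IsCoprime p q)
    (hdeg : q.natDegree < p.natDegree) :
    ∃ C > (0 : ℝ), ∀ c : ℝ, C < c →
      (∃! U : Set ℂ,
        (∃ z ∈ {z : ℂ | c * ‖q.eval z‖ < ‖p.eval z‖},
          U = connectedComponentIn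
            {z : ℂ | c * ‖q.eval z‖ < ‖p.eval z‖} z) ∧
        ¬ Bornology.IsBounded U) ∧
      Set.BijOn
        (fun b => connectedComponentIn
          {z : ℂ | c * ‖q.eval z‖ < ‖p.eval z‖} b)
        {b : ℂ | q.eval b = 0}
        {U : Set ℂ |
          (∃ z ∈ {z : ℂ | c * ‖q.eval z‖ < ‖p.eval z‖},
            U = connectedComponentIn
              {z : ℂ | c * ‖q.eval z‖ < ‖p.eval z‖} z) ∧
          Bornology.IsBounded U} := by
  have hq0 : q ≠ 0 := by
    rintro rfl
    exact hdeg.ne' (natDegree_eq_zero_of_isUnit (isCoprime_zero_right.1 hpq))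
  have hno_common_root : ∀ z, q.eval z = 0 → p.eval z ≠ 0 := fun z hqz hpz => by
    simpa [hpz, hqz] using aeval_ne_zero_of_isCoprime hpq z
  have hZ : {z | q.eval z = 0}.Finite := q.finite_setOfPred_isRoot hq0
  obtain ⟨C, hC⟩ := eventually_atTop.1 <| hZ.eventually_all.2 fun b hb =>
    eventually_connectedComponentIn_isBounded_and_zero_eq (f := fun z => p.eval z)
      p.continuous q.continuous hZ hb
  refine ⟨max C 1, by positivity, fun c hc => ?_⟩
  have hroots := hC c (le_of_max_le_left hc.le)
  have hmem : ∀ b, q.eval b = 0 → c * ‖q.eval b‖ < ‖p.eval b‖ := fun b hb => by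
    simpa [hb] using hno_common_root b hb
  refine ⟨existsUnique_not_isBounded_connectedComponentIn (by simp [Complex.rank_real_complex])
      (p.eventually_cobounded_mul_norm_eval_lt (degree_lt_degree hdeg) c),
    fun b hb => ⟨⟨b, hmem b hb, rfl⟩, (hroots b hb).1⟩, ?_, ?_⟩
  · intro b hb b' hb' (h : connectedComponentIn _ b = connectedComponentIn _ b')
    exact ((hroots b hb).2 b' (h ▸ mem_connectedComponentIn (hmem b' hb')) hb').symm
  · rintro _ ⟨⟨z, hz, rfl⟩, hbdd⟩
    obtain ⟨b, hbU, hb⟩ := exists_zero_mem_connectedComponentIn_of_isBounded p.differentiable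
      q.differentiable hno_common_root hz hbdd
    exact ⟨b, hb, (connectedComponentIn_eq hbU).symm⟩

/-- Let `p, q` be coprime complex polynomials with `deg p > deg q ≥ 1`, and let
`b₁, …, b_t` be the distinct roots of `q`.  Then there is `C > 0` such that for
every `c > C`, the superlevel set `{z : |p(z)| > c·|q(z)|}` has exactly one
unbounded connected component, and its bounded connected components are in
bijection with the roots of `q`, each bounded component containing exactly one
root (via `b ↦ connectedComponentIn _ b`). -/
theorem components_of_large_rational_superlevel
    (p q : Polynomial ℂ) (hpq : IsCoprime p q)
    (hdeg : q.natDegree < p.natDegree) (hq : 1 ≤ q.natDegree) :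
    ∃ C > (0 : ℝ), ∀ c : ℝ, C < c →
      (∃! U : Set ℂ,
        (∃ z ∈ {z : ℂ | c * ‖q.eval z‖ < ‖p.eval z‖},
          U = connectedComponentIn
            {z : ℂ | c * ‖q.eval z‖ < ‖p.eval z‖} z) ∧
        ¬ Bornology.IsBounded U) ∧
      Set.BijOn
        (fun b => connectedComponentIn
          {z : ℂ | c * ‖q.eval z‖ < ‖p.eval z‖} b)
        {b : ℂ | q.eval b = 0}
        {U : Set ℂ |
          (∃ z ∈ {z : ℂ | c * ‖q.eval z‖ < ‖p.eval z‖},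
            U = connectedComponentIn
              {z : ℂ | c * ‖q.eval z‖ < ‖p.eval z‖} z) ∧
          Bornology.IsBounded U} :=
  components_of_large_rational_superlevel_general p q hpq hdeg
end

section
/- Let p be a complex polynomial of degree n ≥ 1 such that the lemniscate Γ_{p,1} = {z ∈ ℂ : |p(z)| = 1} is proper, i.e. smooth and connected; in particular every zero of p lies in Ω₋ = {z : |p(z)| < 1}. Then there exists a function g : ℂ → ℂ, holomorphic and injective on Ω₊ = {z ∈ ℂ : |p(z)| > 1}, such that g(Ω₊) = {w ∈ ℂ : |w| > 1} and g(z)^n = p(z) for all z ∈ Ω₊. -/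
/-!
Fix a root `r₀` of `p`. Along a path `γ` in `Ω₊`, the change of a continuous logarithm of
`p(z) / (z - r₀)ⁿ` is `∑ᵣ (w_γ(r) - w_γ(r₀))`, where `w_γ(x)` is the change of `log (z - x)` and `r`
runs over the roots of `p`. For two paths `γ, γ'` with the same endpoints, `w_γ - w_γ'` is
continuous with values in `2πiℤ` off the paths, hence constant on the connected set
`{|p| ≤ 1}` that contains every root. So `p(z) / (z - r₀)ⁿ` has a continuous, hence holomorphic,
logarithm `L` on `Ω₊`, and `g = (z - r₀) exp (L / n)` is an `n`-th root of `p`.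

The set `{|p| ≤ 1}` is connected because every component of `{|p| < 1}` is bounded, so its frontier
is a nonempty subset of the connected lemniscate; `Ω₊` is connected because, by the maximum modulus
principle, each of its components is unbounded and so meets the connected set `{|z| > R}`.

The image of `g` is open by the open mapping theorem and closed in `{|w| > 1}` because `p` is
proper, so it is all of `{|w| > 1}`. Then `g` is injective: the `n` values `ζ g(z)`, `ζⁿ = 1`, all
have preimages, which are roots of `p - g(z)ⁿ`, a polynomial with at most `n` roots.
-/

open Complex Set Metric Filter Topology unitInterval Polynomial

theorem IsPreconnected.sub_eq_sub_of_exp_eq {α : Type*} [TopologicalSpace α] {s : Set α}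
    (hs : IsPreconnected s) {f g : α → ℂ} (hf : ContinuousOn f s) (hg : ContinuousOn g s)
    (hfg : ∀ x ∈ s, exp (f x) = exp (g x)) {x y : α} (hx : x ∈ s) (hy : y ∈ s) :
    f x - g x = f y - g y := by
  refine hs.constant_of_mapsTo (T := (AddSubgroup.zmultiples (2 * Real.pi * Complex.I) : Set ℂ))
    (isDiscrete_iff_discreteTopology.mpr (NormedSpace.discreteTopology_zmultiples _)) (hf.sub hg)
    (fun z hz ↦ ?_) hx hy
  obtain ⟨k, hk⟩ := exp_eq_one_iff.mp (show exp (f z - g z) = 1 by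
    rw [exp_sub, hfg z hz, div_self (exp_ne_zero _)])
  exact ⟨k, show k • _ = f z - g z by rw [hk, zsmul_eq_mul]⟩

theorem div_mem_slitPlane_of_norm_sub_lt {a b : ℂ} (h : ‖a - b‖ < ‖b‖) : a / b ∈ slitPlane := by
  have hb : b ≠ 0 := norm_pos_iff.mp ((norm_nonneg _).trans_lt h)
  have hlt : ‖(a - b) / b‖ < 1 := by rwa [norm_div, div_lt_one (norm_pos_iff.mpr hb)]
  simpa [sub_div, div_self hb] using mem_slitPlane_of_norm_lt_one hlt

theorem differentiableOn_of_exp_eq {U : Set ℂ} (hU : IsOpen U) {f L : ℂ → ℂ}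
    (hf : DifferentiableOn ℂ f U) (hL : ContinuousOn L U) (hexp : ∀ z ∈ U, exp (L z) = f z) :
    DifferentiableOn ℂ L U := by
  intro z₁ hz₁
  have hfz₁ : f z₁ ≠ 0 := hexp z₁ hz₁ ▸ exp_ne_zero _
  have h1 : f z₁ / f z₁ ∈ slitPlane := by simp [div_self hfz₁]
  have hfc : ContinuousAt (fun z ↦ f z / f z₁) z₁ :=
    (hf.continuousOn.continuousAt (hU.mem_nhds hz₁)).div_const _
  obtain ⟨ε, hε, hball⟩ := Metric.mem_nhds_iff.1 (inter_mem (hU.mem_nhds hz₁)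
    (hfc.preimage_mem_nhds (isOpen_slitPlane.mem_nhds h1)))
  have hballU : ball z₁ ε ⊆ U := fun w hw ↦ (hball hw).1
  have heq : ∀ z ∈ ball z₁ ε, L z = L z₁ + log (f z / f z₁) := by
    intro z hz
    have := (convex_ball z₁ ε).isPreconnected.sub_eq_sub_of_exp_eq (hL.mono hballU)
      (g := fun w ↦ L z₁ + log (f w / f z₁))
      (continuousOn_const.add (((hf.continuousOn.mono hballU).div_const _).clog
        fun w hw ↦ (hball hw).2))
      (fun w hw ↦ by rw [exp_add, exp_log (slitPlane_ne_zero (hball hw).2), hexp z₁ hz₁,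
        hexp w (hballU hw), mul_div_cancel₀ _ hfz₁]) hz (mem_ball_self hε)
    rw [div_self hfz₁, log_one, add_zero, sub_self] at this
    exact sub_eq_zero.1 this
  have hlog : DifferentiableAt ℂ (fun z ↦ L z₁ + log (f z / f z₁)) z₁ :=
    (differentiableAt_const _).add (((hf.differentiableAt (hU.mem_nhds hz₁)).div_const _).clog h1)
  exact (hlog.congr_of_eventuallyEq
    (eventually_of_mem (ball_mem_nhds z₁ hε) heq)).differentiableWithinAt

open scoped Classical in
/-- The increment along `I` of a continuous logarithm of `φ`, or `0` if there is none. -/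
noncomputable def logIncrement (φ : I → ℂ) : ℂ :=
  if h : ∃ Λ : I → ℂ, Continuous Λ ∧ ∀ t, exp (Λ t) = φ t then h.choose 1 - h.choose 0 else 0

theorem exists_continuous_exp_eq {φ : I → ℂ} (hφ : Continuous φ) (h0 : ∀ t, φ t ≠ 0) :
    ∃ Λ : I → ℂ, Continuous Λ ∧ ∀ t, exp (Λ t) = φ t := by
  obtain ⟨Λ, hΛ, -⟩ := isCoveringMap_exp.exists_path_lifts ⟨fun t ↦ ⟨φ t, h0 t⟩, by fun_prop⟩
    (log (φ 0)) (Subtype.ext (exp_log (h0 0)).symm)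
  exact ⟨Λ, Λ.continuous, fun t ↦ congr_arg Subtype.val (congr_fun hΛ t)⟩

theorem logIncrement_eq {φ Λ : I → ℂ} (hΛ : Continuous Λ) (h : ∀ t, exp (Λ t) = φ t) :
    logIncrement φ = Λ 1 - Λ 0 := by
  have h' : ∃ Λ : I → ℂ, Continuous Λ ∧ ∀ t, exp (Λ t) = φ t := ⟨Λ, hΛ, h⟩
  rw [logIncrement, dif_pos h', sub_eq_sub_iff_sub_eq_sub]
  exact isPreconnected_univ.sub_eq_sub_of_exp_eq h'.choose_spec.1.continuousOn hΛ.continuousOn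
    (fun t _ ↦ by rw [h'.choose_spec.2, h]) trivial trivial

theorem exp_logIncrement {φ : I → ℂ} (hφ : Continuous φ) (h0 : ∀ t, φ t ≠ 0) :
    exp (logIncrement φ) = φ 1 / φ 0 := by
  obtain ⟨Λ, hΛc, hΛ⟩ := exists_continuous_exp_eq hφ h0
  rw [logIncrement_eq hΛc hΛ, exp_sub, hΛ, hΛ]

theorem continuousAt_logIncrement_sub {γ : I → ℂ} (hγ : Continuous γ) {x₀ : ℂ}
    (hx₀ : x₀ ∉ range γ) : ContinuousAt (fun x ↦ logIncrement fun t ↦ γ t - x) x₀ := by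
  have hne : ∀ t, γ t - x₀ ≠ 0 := fun t ↦ sub_ne_zero.2 fun h ↦ hx₀ ⟨t, h⟩
  obtain ⟨Λ, hΛc, hΛ⟩ := exists_continuous_exp_eq (φ := fun t ↦ γ t - x₀) (by fun_prop) hne
  have hδ : 0 < infDist x₀ (range γ) :=
    ((isCompact_range hγ).isClosed.notMem_iff_infDist_pos (range_nonempty γ)).1 hx₀
  have hslit : ∀ x ∈ ball x₀ (infDist x₀ (range γ)), ∀ t,
      (γ t - x) / (γ t - x₀) ∈ slitPlane := fun x hx t ↦ by
    refine div_mem_slitPlane_of_norm_sub_lt ?_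
    calc ‖γ t - x - (γ t - x₀)‖ = dist x₀ x := by rw [dist_eq_norm, sub_sub_sub_cancel_left]
      _ < infDist x₀ (range γ) := by rwa [dist_comm]
      _ ≤ ‖γ t - x₀‖ := by
        simpa [dist_eq_norm, norm_sub_rev] using infDist_le_dist_of_mem (x := x₀) (mem_range_self t)
  have key : ∀ x ∈ ball x₀ (infDist x₀ (range γ)), (logIncrement fun t ↦ γ t - x) =
      Λ 1 - Λ 0 + log ((γ 1 - x) / (γ 1 - x₀)) - log ((γ 0 - x) / (γ 0 - x₀)) := by
    intro x hx
    rw [logIncrement_eq (Λ := fun t ↦ Λ t + log ((γ t - x) / (γ t - x₀)))]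
    · ring
    · exact hΛc.add (Continuous.clog (by fun_prop (disch := exact hne _)) (hslit x hx))
    · intro t
      rw [exp_add, hΛ, exp_log (slitPlane_ne_zero (hslit x hx t)), mul_div_cancel₀ _ (hne t)]
  refine ContinuousAt.congr ?_ (eventually_of_mem (ball_mem_nhds x₀ hδ) fun x hx ↦ (key x hx).symm)
  have h1 : ∀ s : I, (γ s - x₀) / (γ s - x₀) ∈ slitPlane := fun s ↦ by
    simp [div_self (hne s)]
  have hlog : ∀ s : I, ContinuousAt (fun x ↦ log ((γ s - x) / (γ s - x₀))) x₀ := fun s ↦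
    ContinuousAt.clog ((continuousAt_const.sub continuousAt_id).div_const _) (h1 s)
  exact (continuousAt_const.add (hlog 1)).sub (hlog 0)

theorem IsPreconnected.logIncrement_sub_sub_eq {K : Set ℂ} (hK : IsPreconnected K)
    {γ γ' : I → ℂ} (hγ : Continuous γ) (hγ' : Continuous γ') (h0 : γ 0 = γ' 0) (h1 : γ 1 = γ' 1)
    (hγK : Disjoint (range γ) K) (hγ'K : Disjoint (range γ') K) {x y : ℂ} (hx : x ∈ K)
    (hy : y ∈ K) :
    (logIncrement fun t ↦ γ t - x) - (logIncrement fun t ↦ γ' t - x) =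
      (logIncrement fun t ↦ γ t - y) - (logIncrement fun t ↦ γ' t - y) := by
  have hne : ∀ {δ : I → ℂ}, Disjoint (range δ) K → ∀ z ∈ K, ∀ t, δ t - z ≠ 0 :=
    fun h z hz t ↦ sub_ne_zero.2 fun e ↦ disjoint_right.1 h hz ⟨t, e⟩
  refine hK.sub_eq_sub_of_exp_eq
    (fun z hz ↦ (continuousAt_logIncrement_sub hγ (disjoint_right.1 hγK hz)).continuousWithinAt)
    (fun z hz ↦ (continuousAt_logIncrement_sub hγ' (disjoint_right.1 hγ'K hz)).continuousWithinAt)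
    (fun z hz ↦ ?_) hx hy
  rw [exp_logIncrement (by fun_prop) (hne hγK z hz), exp_logIncrement (by fun_prop) (hne hγ'K z hz),
    h0, h1]

theorem exists_continuous_exp_eq_of_logIncrement_eq {A : Type*} [TopologicalSpace A]
    [PathConnectedSpace A] [LocallyPathConnectedSpace A] {q : A → ℂ} (hq : Continuous q)
    (h0 : ∀ a, q a ≠ 0)
    (h : ∀ γ γ' : C(I, A), γ 0 = γ' 0 → γ 1 = γ' 1 → logIncrement (q ∘ γ) = logIncrement (q ∘ γ')) :
    ∃ L : A → ℂ, Continuous L ∧ ∀ a, exp (L a) = q a := by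
  obtain ⟨a₀⟩ := PathConnectedSpace.nonempty (X := A)
  let f : C(A, {z : ℂ // z ≠ 0}) := ⟨fun a ↦ ⟨q a, h0 a⟩, by fun_prop⟩
  have hlift : ∀ {Γ : C(I, ℂ)} {γ : C(I, A)},
      (fun z : ℂ ↦ (⟨exp z, exp_ne_zero z⟩ : {z : ℂ // z ≠ 0})) ∘ Γ = f.comp γ →
        logIncrement (q ∘ γ) = Γ 1 - Γ 0 :=
    fun {Γ _} h ↦ logIncrement_eq Γ.continuous fun t ↦ congr_arg Subtype.val (congr_fun h t)
  obtain ⟨F, ⟨-, hF⟩, -⟩ := isCoveringMap_exp.isLocalHomeomorph.existsUnique_continuousMap_lifts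
    f a₀ (log (q a₀)) (Subtype.ext (exp_log (h0 a₀)))
    (fun γ hγ ↦ (isCoveringMap_exp.exists_path_lifts (f.comp γ) (log (q a₀))
      (Subtype.ext (by simp [f, hγ, exp_log (h0 a₀)]))).imp fun _ h ↦ h.symm)
    (fun γ γ' Γ Γ' hγ hγ' hΓ hΓ' hΓl hΓ'l h1 ↦ by
      simpa [hlift hΓl, hlift hΓ'l, hΓ, hΓ'] using h γ γ' (hγ.trans hγ'.symm) h1)
  exact ⟨F, F.continuous, fun a ↦ congr_arg Subtype.val (congr_fun hF a)⟩

theorem IsOpen.frontier_connectedComponentIn_subset {X : Type*} [TopologicalSpace X]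
    [LocallyConnectedSpace X] {U : Set X} (hU : IsOpen U) (x : X) :
    frontier (connectedComponentIn U x) ⊆ frontier U := by
  intro y hy
  rw [hU.connectedComponentIn.frontier_eq] at hy
  rw [hU.frontier_eq]
  refine ⟨closure_mono (connectedComponentIn_subset U x) hy.1, fun hyU ↦ hy.2 ?_⟩
  obtain ⟨w, hwy, hwx⟩ := mem_closure_iff.1 hy.1 _ hU.connectedComponentIn
    (mem_connectedComponentIn hyU)
  rw [connectedComponentIn_eq hwx, ← connectedComponentIn_eq hwy]
  exact mem_connectedComponentIn hyU

theorem IsPreconnected.of_forall_exists_isPreconnected_meets {X : Type*} [TopologicalSpace X]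
    {s S : Set X} (hS : IsPreconnected S) (hSs : S ⊆ s)
    (h : ∀ y ∈ s, ∃ t ⊆ s, y ∈ t ∧ IsPreconnected t ∧ (t ∩ S).Nonempty) : IsPreconnected s := by
  rcases s.eq_empty_or_nonempty with rfl | ⟨y₀, hy₀⟩
  · exact isPreconnected_empty
  obtain ⟨-, -, -, -, x, -, hx⟩ := h y₀ hy₀
  refine isPreconnected_of_forall x fun y hy ↦ ?_
  obtain ⟨t, hts, hyt, ht, z, hzt, hzS⟩ := h y hy
  exact ⟨t ∪ S, union_subset hts hSs, Or.inr hx, Or.inl hyt, ht.union z hzt hzS hS⟩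

theorem isPreconnected_setOf_lt_norm {R : ℝ} (hR : 0 < R) : IsPreconnected {z : ℂ | R < ‖z‖} := by
  have : {z : ℂ | R < ‖z‖} = exp '' {w | Real.log R < w.re} := by
    ext z
    refine ⟨fun hz ↦ ⟨log z, ?_, exp_log (norm_pos_iff.1 (hR.trans hz))⟩, ?_⟩
    · show Real.log R < (log z).re
      rw [log_re]
      exact Real.log_lt_log hR hz
    · rintro ⟨w, hw, rfl⟩
      show R < ‖exp w‖
      rw [norm_exp, ← Real.exp_log hR]
      exact Real.exp_lt_exp.2 hw
  rw [this]
  exact (convex_halfSpace_re_gt _).isPreconnected.image _ continuous_exp.continuousOn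

namespace Polynomial

variable {p : ℂ[X]}

theorem eval_eq_leadingCoeff_mul_prod_roots (z : ℂ) :
    p.eval z = p.leadingCoeff * (p.roots.map fun r ↦ z - r).prod := by
  conv_lhs => rw [← C_leadingCoeff_mul_prod_multiset_X_sub_C (p := p)
    IsAlgClosed.card_roots_eq_natDegree]
  simp [eval_multiset_prod]

theorem logIncrement_eval_div_pow (hp : p ≠ 0) {γ : I → ℂ} (hγ : Continuous γ)
    {r₀ : ℂ} (hr₀ : r₀ ∉ range γ) (hroots : ∀ r ∈ p.roots, r ∉ range γ) :
    logIncrement (fun t ↦ p.eval (γ t) / (γ t - r₀) ^ p.natDegree) =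
      (p.roots.map fun r ↦ logIncrement fun t ↦ γ t - r).sum -
        p.natDegree * logIncrement fun t ↦ γ t - r₀ := by
  have hlog : ∀ x ∉ range γ, ∃ Λ : I → ℂ, Continuous Λ ∧ ∀ t, exp (Λ t) = γ t - x :=
    fun x hx ↦ exists_continuous_exp_eq (by fun_prop) fun t ↦ sub_ne_zero.2 fun h ↦ hx ⟨t, h⟩
  choose! Λ hΛc hΛ using hlog
  have hinc : ∀ x ∉ range γ, (logIncrement fun t ↦ γ t - x) = Λ x 1 - Λ x 0 :=
    fun x hx ↦ logIncrement_eq (hΛc x hx) (hΛ x hx)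
  rw [logIncrement_eq (Λ := fun t ↦ log p.leadingCoeff + (p.roots.map fun r ↦ Λ r t).sum -
      p.natDegree * Λ r₀ t), hinc r₀ hr₀, Multiset.map_congr rfl fun r hr ↦ hinc r (hroots r hr),
    Multiset.sum_map_sub]
  · ring
  · exact (continuous_const.add (continuous_multiset_sum _ fun r hr ↦ hΛc r (hroots r hr))).sub
      (continuous_const.mul (hΛc r₀ hr₀))
  · intro t
    rw [exp_sub, exp_add, exp_log (leadingCoeff_ne_zero.2 hp), exp_multiset_sum, Multiset.map_map,
      exp_nat_mul, hΛ r₀ hr₀, eval_eq_leadingCoeff_mul_prod_roots]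
    congr 3
    exact Multiset.map_congr rfl fun r hr ↦ hΛ r (hroots r hr) t

theorem logIncrement_eval_div_pow_eq (hp : p ≠ 0) {K : Set ℂ} (hK : IsPreconnected K)
    (hroots : ∀ r ∈ p.roots, r ∈ K) {r₀ : ℂ} (hr₀ : r₀ ∈ K) {γ γ' : I → ℂ} (hγ : Continuous γ)
    (hγ' : Continuous γ') (h0 : γ 0 = γ' 0) (h1 : γ 1 = γ' 1) (hγK : Disjoint (range γ) K)
    (hγ'K : Disjoint (range γ') K) :
    logIncrement (fun t ↦ p.eval (γ t) / (γ t - r₀) ^ p.natDegree) =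
      logIncrement (fun t ↦ p.eval (γ' t) / (γ' t - r₀) ^ p.natDegree) := by
  have hnot : ∀ {δ : I → ℂ}, Disjoint (range δ) K → ∀ z ∈ K, z ∉ range δ :=
    fun h z hz ↦ disjoint_right.1 h hz
  rw [← sub_eq_zero, logIncrement_eval_div_pow hp hγ (hnot hγK r₀ hr₀)
      (fun r hr ↦ hnot hγK r (hroots r hr)),
    logIncrement_eval_div_pow hp hγ' (hnot hγ'K r₀ hr₀) (fun r hr ↦ hnot hγ'K r (hroots r hr)),
    sub_sub_sub_comm, ← Multiset.sum_map_sub, ← mul_sub,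
    Multiset.map_congr rfl fun r hr ↦
      hK.logIncrement_sub_sub_eq hγ hγ' h0 h1 hγK hγ'K (hroots r hr) hr₀,
    Multiset.map_const', Multiset.sum_replicate, IsAlgClosed.card_roots_eq_natDegree, nsmul_eq_mul,
    sub_self]

theorem isCompact_setOf_norm_eval_le (hp : 0 < p.degree) (M : ℝ) :
    IsCompact {z | ‖p.eval z‖ ≤ M} := by
  simpa [Set.preimage] using (p.isProperMap_eval hp).isCompact_preimage (isCompact_closedBall 0 M)

theorem isConnected_setOf_one_lt_norm_eval (hp : 0 < p.degree) :
    IsConnected {z | 1 < ‖p.eval z‖} := by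
  set U := {z : ℂ | 1 < ‖p.eval z‖}
  have hU : IsOpen U := isOpen_lt continuous_const (by fun_prop)
  have hKU : {z | ‖p.eval z‖ ≤ 1}ᶜ = U := by ext; simp [U]
  refine ⟨hKU ▸ nonempty_compl.2 (isCompact_setOf_norm_eval_le hp 1).ne_univ, ?_⟩
  obtain ⟨R, hR⟩ := (isCompact_setOf_norm_eval_le hp 1).isBounded.subset_closedBall 0
  have hFar : {z : ℂ | max R 1 < ‖z‖} ⊆ U := fun z hz ↦ show 1 < ‖p.eval z‖ from not_le.1 fun h ↦
    hz.not_ge ((mem_closedBall_zero_iff.1 (hR h)).trans (le_max_left R 1))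
  refine (isPreconnected_setOf_lt_norm (by positivity)).of_forall_exists_isPreconnected_meets
    hFar fun y hy ↦ ⟨_, connectedComponentIn_subset U y, mem_connectedComponentIn hy,
      isPreconnected_connectedComponentIn, ?_⟩
  by_contra hC
  have hbdd : Bornology.IsBounded (connectedComponentIn U y) :=
    (isBounded_closedBall (x := 0) (r := max R 1)).subset fun z hz ↦
      mem_closedBall_zero_iff.2 (not_lt.1 fun h ↦ hC ⟨z, hz, h⟩)
  have := norm_le_of_forall_mem_frontier_norm_le hbdd p.differentiable.diffContOnCl
    (fun z hz ↦ (frontier_lt_subset_eq continuous_const (by fun_prop)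
      (hU.frontier_connectedComponentIn_subset y hz)).symm.le)
    (subset_closure (mem_connectedComponentIn hy))
  exact (lt_irrefl 1 (hy.trans_le this))

theorem isPreconnected_setOf_norm_eval_le (hp : 0 < p.degree)
    (hΓ : IsPreconnected {z | ‖p.eval z‖ = 1}) : IsPreconnected {z | ‖p.eval z‖ ≤ 1} := by
  set V := {z : ℂ | ‖p.eval z‖ < 1}
  have hV : IsOpen V := isOpen_lt (by fun_prop) continuous_const
  refine hΓ.of_forall_exists_isPreconnected_meets (fun z hz ↦ le_of_eq hz) fun y hy ↦ ?_
  rcases (show ‖p.eval y‖ ≤ 1 from hy).lt_or_eq with hlt | heq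
  · have hbdd : Bornology.IsBounded (connectedComponentIn V y) :=
      (isCompact_setOf_norm_eval_le hp 1).isBounded.subset fun z hz ↦
        show ‖p.eval z‖ ≤ 1 from (connectedComponentIn_subset V y hz : ‖p.eval z‖ < 1).le
    obtain ⟨z, hz⟩ : (frontier (connectedComponentIn V y)).Nonempty :=
      nonempty_frontier_iff.2 ⟨⟨y, mem_connectedComponentIn hlt⟩,
        fun h ↦ NormedSpace.unbounded_univ ℝ ℂ (h ▸ hbdd)⟩
    exact ⟨_, closure_minimal (fun z hz ↦
        show ‖p.eval z‖ ≤ 1 from (connectedComponentIn_subset V y hz : ‖p.eval z‖ < 1).le)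
      (isClosed_le (by fun_prop) continuous_const), subset_closure (mem_connectedComponentIn hlt),
      isPreconnected_connectedComponentIn.closure, z, frontier_subset_closure hz,
      frontier_lt_subset_eq (by fun_prop) continuous_const
        (hV.frontier_connectedComponentIn_subset y hz)⟩
  · exact ⟨{y}, singleton_subset_iff.2 hy, rfl, isPreconnected_singleton, y, rfl, heq⟩

theorem exists_continuousOn_exp_eq_eval_div_pow (hp : 0 < p.degree)
    (hK : IsPreconnected {z | ‖p.eval z‖ ≤ 1}) {r₀ : ℂ} (hr₀ : ‖p.eval r₀‖ ≤ 1) :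
    ∃ L : ℂ → ℂ, ContinuousOn L {z | 1 < ‖p.eval z‖} ∧
      ∀ z, 1 < ‖p.eval z‖ → exp (L z) = p.eval z / (z - r₀) ^ p.natDegree := by
  set U := {z : ℂ | 1 < ‖p.eval z‖}
  have hU : IsOpen U := isOpen_lt continuous_const (by fun_prop)
  have : PathConnectedSpace U := isPathConnected_iff_pathConnectedSpace.1
    (hU.isConnected_iff_isPathConnected.1 (isConnected_setOf_one_lt_norm_eval hp))
  have := hU.locallyPathConnectedSpace
  have hp0 : p ≠ 0 := ne_zero_of_degree_gt hp
  have hr₀U : ∀ z : U, (z : ℂ) - r₀ ≠ 0 := fun z ↦ sub_ne_zero.2 fun h ↦ (h ▸ hr₀).not_gt z.2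
  have hdisj : ∀ γ : C(I, U), Disjoint (range fun t ↦ (γ t : ℂ)) {z | ‖p.eval z‖ ≤ 1} :=
    fun γ ↦ disjoint_left.2 fun x ⟨t, ht⟩ hx ↦ by
      subst ht
      exact (show ‖p.eval (Subtype.val (γ t))‖ ≤ 1 from hx).not_gt (γ t).2
  obtain ⟨L, hLc, hL⟩ := exists_continuous_exp_eq_of_logIncrement_eq
    (q := fun z : U ↦ p.eval (z : ℂ) / ((z : ℂ) - r₀) ^ p.natDegree)
    (by fun_prop (disch := exact fun z ↦ pow_ne_zero _ (hr₀U z)))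
    (fun z ↦ div_ne_zero (norm_pos_iff.1 (one_pos.trans z.2)) (pow_ne_zero _ (hr₀U z)))
    fun γ γ' h0 h1 ↦ logIncrement_eval_div_pow_eq hp0 hK
      (fun r hr ↦ by simp [((mem_roots hp0).1 hr).eq_zero]) hr₀ (by fun_prop) (by fun_prop)
      (congr_arg Subtype.val h0) (congr_arg Subtype.val h1) (hdisj γ) (hdisj γ')
  refine ⟨fun z ↦ if h : z ∈ U then L ⟨z, h⟩ else 0, ?_, fun z hz ↦ by simp [U, hz, hL]⟩
  rw [continuousOn_iff_continuous_domRestrict]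
  convert hLc
  ext z
  simp [z.2]

theorem exists_differentiableOn_pow_eq_eval (hp : 0 < p.degree)
    (hK : IsPreconnected {z | ‖p.eval z‖ ≤ 1}) :
    ∃ g : ℂ → ℂ, DifferentiableOn ℂ g {z | 1 < ‖p.eval z‖} ∧
      ∀ z, 1 < ‖p.eval z‖ → g z ^ p.natDegree = p.eval z := by
  obtain ⟨r₀, hr₀⟩ := Complex.exists_root hp
  obtain ⟨L, hLc, hL⟩ :=
    exists_continuousOn_exp_eq_eval_div_pow hp hK (r₀ := r₀) (by simp [hr₀.eq_zero])
  have hU : IsOpen {z | 1 < ‖p.eval z‖} := isOpen_lt continuous_const (by fun_prop)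
  have hr₀U : ∀ z, 1 < ‖p.eval z‖ → z - r₀ ≠ 0 := fun z hz h ↦ by
    rw [sub_eq_zero.1 h, hr₀.eq_zero, norm_zero] at hz
    exact zero_lt_one.not_gt hz
  have hLd : DifferentiableOn ℂ L {z | 1 < ‖p.eval z‖} :=
    differentiableOn_of_exp_eq hU (p.differentiable.differentiableOn.div
      ((differentiableOn_id.sub_const _).pow _) fun z hz ↦ pow_ne_zero _ (hr₀U z hz)) hLc hL
  refine ⟨fun z ↦ (z - r₀) * exp (L z / p.natDegree),
    (differentiableOn_id.sub_const _).mul (hLd.div_const _).cexp, fun z hz ↦ ?_⟩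
  have hd : (p.natDegree : ℂ) ≠ 0 := Nat.cast_ne_zero.2 (natDegree_pos_iff_degree_pos.2 hp).ne'
  rw [mul_pow, ← exp_nat_mul, mul_div_cancel₀ _ hd, hL z hz,
    mul_div_cancel₀ _ (pow_ne_zero _ (hr₀U z hz))]

theorem closure_image_inter_subset_image (hp : 0 < p.degree) {n : ℕ} (hn : n ≠ 0) {g : ℂ → ℂ}
    (hg : ContinuousOn g {z | 1 < ‖p.eval z‖})
    (hpow : ∀ z, 1 < ‖p.eval z‖ → g z ^ n = p.eval z) :
    closure (g '' {z | 1 < ‖p.eval z‖}) ∩ {w | 1 < ‖w‖} ⊆ g '' {z | 1 < ‖p.eval z‖} := by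
  rintro y ⟨hcl, hy⟩
  have hy : 1 < ‖y‖ := hy
  set Z := {z | ‖p.eval z‖ ≤ (2 * ‖y‖) ^ n} ∩ {z | ((1 + ‖y‖) / 2) ^ n ≤ ‖p.eval z‖}
  have hZ : IsCompact Z := (isCompact_setOf_norm_eval_le hp _).inter_right
    (isClosed_le continuous_const (by fun_prop))
  have hZU : Z ⊆ {z | 1 < ‖p.eval z‖} :=
    fun z hz ↦ (one_lt_pow₀ (a := (1 + ‖y‖) / 2) (by linarith) hn).trans_le hz.2
  have hball : ball y ((‖y‖ - 1) / 2) ∩ g '' {z | 1 < ‖p.eval z‖} ⊆ g '' Z := by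
    rintro _ ⟨hw, z, hz, rfl⟩
    have h1 : ‖g z - y‖ < (‖y‖ - 1) / 2 := mem_ball_iff_norm.1 hw
    have h2 := norm_sub_norm_le (g z) y
    have h3 := norm_sub_norm_le y (g z)
    rw [norm_sub_rev] at h3
    refine ⟨z, ⟨?_, ?_⟩, rfl⟩ <;>
      simp only [mem_ofPred_eq, ← hpow z hz, norm_pow] <;>
      exact pow_le_pow_left₀ (by positivity) (by linarith) n
  exact image_mono hZU ((hZ.image_of_continuousOn (hg.mono hZU)).isClosed.closure_subset
    (closure_mono hball (isOpen_ball.inter_closure ⟨mem_ball_self (by linarith), hcl⟩)))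

theorem image_eq_setOf_one_lt_norm (hp : 0 < p.degree) {n : ℕ} (hn : n ≠ 0) {g : ℂ → ℂ}
    (hg : DifferentiableOn ℂ g {z | 1 < ‖p.eval z‖})
    (hpow : ∀ z, 1 < ‖p.eval z‖ → g z ^ n = p.eval z) :
    g '' {z | 1 < ‖p.eval z‖} = {w | 1 < ‖w‖} := by
  set U := {z : ℂ | 1 < ‖p.eval z‖}
  have hU : IsOpen U := isOpen_lt continuous_const (by fun_prop)
  have hUc := isConnected_setOf_one_lt_norm_eval hp
  have hsub : g '' U ⊆ {w | 1 < ‖w‖} := image_subset_iff.2 fun z hz ↦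
    (one_lt_pow_iff_of_nonneg (norm_nonneg _) hn).1 (by rw [← norm_pow, hpow z hz]; exact hz)
  have hopen : IsOpen (g '' U) := by
    refine ((hg.analyticOnNhd hU).is_constant_or_isOpen hUc.isPreconnected).resolve_left ?_
      U subset_rfl hU
    rintro ⟨w, hw⟩
    obtain ⟨z, hz⟩ := hUc.nonempty
    have hpC : p = C (w ^ n) := eq_of_infinite_eval_eq _ _
      ((infinite_of_mem_nhds z (hU.mem_nhds hz)).mono fun x hx ↦ by simp [← hpow x hx, hw x hx])
    exact (degree_C_le.trans_lt (hpC ▸ hp)).false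
  refine hsub.antisymm ((isPreconnected_setOf_lt_norm one_pos).subset_of_closure_inter_subset hopen
    ?_ (closure_image_inter_subset_image hp hn hg.continuousOn hpow))
  obtain ⟨z, hz⟩ := hUc.nonempty
  exact ⟨g z, hsub (mem_image_of_mem g hz), mem_image_of_mem g hz⟩

theorem injOn_of_pow_eq_eval {n : ℕ} (hn : n ≠ 0) (hdeg : p.natDegree = n) {U : Set ℂ}
    {g : ℂ → ℂ} (hpow : ∀ z ∈ U, g z ^ n = p.eval z) (himage : g '' U = {w | 1 < ‖w‖}) :
    InjOn g U := by
  classical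
  intro z₁ hz₁ z₂ hz₂ h12
  set w := g z₁
  have hw : w ∈ {w : ℂ | 1 < ‖w‖} := himage ▸ mem_image_of_mem g hz₁
  have hq0 : p - C (w ^ n) ≠ 0 := fun h ↦ hn (by rw [← hdeg, ← natDegree_sub_C (a := w ^ n), h,
    natDegree_zero])
  set s := (p - C (w ^ n)).roots.toFinset.filter (· ∈ U)
  have hs : ∀ z, z ∈ s ↔ z ∈ U ∧ p.eval z = w ^ n := fun z ↦ by
    simp only [s, Finset.mem_filter, Multiset.mem_toFinset, mem_roots hq0, IsRoot.def, eval_sub,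
      eval_C, sub_eq_zero, and_comm]
  have hn0 : 0 < n := Nat.pos_of_ne_zero hn
  have hmaps : MapsTo g s (nthRootsFinset n (w ^ n)) := fun z hz ↦ by
    rw [Finset.mem_coe, hs] at hz
    rw [Finset.mem_coe, mem_nthRootsFinset hn0, hpow z hz.1, hz.2]
  have hsurj : SurjOn g s (nthRootsFinset n (w ^ n)) := fun v hv ↦ by
    rw [Finset.mem_coe, mem_nthRootsFinset hn0] at hv
    have hvE : v ∈ g '' U := by
      rw [himage, mem_ofPred_eq, (pow_left_inj₀ (norm_nonneg v) (norm_nonneg w) hn).1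
        (by rw [← norm_pow, ← norm_pow, hv])]
      exact hw
    obtain ⟨z, hz, rfl⟩ := hvE
    exact ⟨z, (hs z).2 ⟨hz, by rw [← hpow z hz, hv]⟩, rfl⟩
  have hcard : s.card ≤ (nthRootsFinset n (w ^ n)).card := by
    have hζ := isPrimitiveRoot_exp n hn
    calc s.card ≤ (p - C (w ^ n)).roots.toFinset.card := Finset.card_filter_le _ _
      _ ≤ (p - C (w ^ n)).natDegree := (Multiset.toFinset_card_le _).trans (card_roots' _)
      _ = (nthRootsFinset n (w ^ n)).card := by
        rw [natDegree_sub_C, hdeg, nthRootsFinset_def, Multiset.toFinset_card_of_nodup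
          (hζ.nthRoots_nodup (pow_ne_zero n (norm_pos_iff.1 (one_pos.trans hw)))),
          hζ.card_nthRoots, if_pos ⟨w, rfl⟩]
  exact Finset.injOn_of_surjOn_of_card_le g hmaps hsurj hcard ((hs z₁).2 ⟨hz₁, hpow z₁ hz₁ ▸ rfl⟩)
    ((hs z₂).2 ⟨hz₂, by rw [← hpow z₂ hz₂, ← h12]⟩) h12

end Polynomial

theorem conformal_root_on_circle_domain_at_infinity_general
    (p : Polynomial ℂ) (n : ℕ) (hn : 1 ≤ n) (hdeg : p.natDegree = n)
    (hconn : IsConnected {z : ℂ | ‖p.eval z‖ = 1}) :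
    ∃ g : ℂ → ℂ,
      DifferentiableOn ℂ g {z : ℂ | 1 < ‖p.eval z‖} ∧
      Set.InjOn g {z : ℂ | 1 < ‖p.eval z‖} ∧
      g '' {z : ℂ | 1 < ‖p.eval z‖} = {w : ℂ | 1 < ‖w‖} ∧
      ∀ z : ℂ, 1 < ‖p.eval z‖ → g z ^ n = p.eval z := by
  have hp : 0 < p.degree := natDegree_pos_iff_degree_pos.1 (hdeg ▸ hn)
  obtain ⟨g, hg, hpow⟩ :=
    exists_differentiableOn_pow_eq_eval hp (isPreconnected_setOf_norm_eval_le hp hconn.2)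
  rw [hdeg] at hpow
  have himage := image_eq_setOf_one_lt_norm hp (by omega) hg hpow
  exact ⟨g, hg, injOn_of_pow_eq_eval (by omega) hdeg (fun z hz ↦ hpow z hz) himage, himage, hpow⟩

/-- Let `p` have degree `n ≥ 1` with `Γ_{p,1}` proper (smooth and connected).
Then `z ↦ p(z)^{1/n}` is a well-defined conformal map from
`Ω₊ = {z : |p(z)| > 1}` onto the exterior of the unit disk: there is `g`
holomorphic and injective on `Ω₊` with `g(Ω₊) = {w : |w| > 1}` and `g^n = p`
on `Ω₊`. -/
theorem conformal_root_on_circle_domain_at_infinity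
    (p : Polynomial ℂ) (n : ℕ) (hn : 1 ≤ n) (hdeg : p.natDegree = n)
    (hsmooth : ∀ z : ℂ, ‖p.eval z‖ = 1 → p.derivative.eval z ≠ 0)
    (hconn : IsConnected {z : ℂ | ‖p.eval z‖ = 1}) :
    ∃ g : ℂ → ℂ,
      DifferentiableOn ℂ g {z : ℂ | 1 < ‖p.eval z‖} ∧
      Set.InjOn g {z : ℂ | 1 < ‖p.eval z‖} ∧
      g '' {z : ℂ | 1 < ‖p.eval z‖} = {w : ℂ | 1 < ‖w‖} ∧
      ∀ z : ℂ, 1 < ‖p.eval z‖ → g z ^ n = p.eval z :=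
  conformal_root_on_circle_domain_at_infinity_general p n hn hdeg hconn
end

section
/- Let p(z) = ∏_{k=1}^{n} (z − ζ_k) be a complex polynomial of degree n ≥ 1 whose lemniscate Γ_{p,1} = {z : |p(z)| = 1} is proper (smooth and connected), so all ζ_k lie in Ω₋ = {z : |p(z)| < 1}. Let φ₋ : ℂ → ℂ be continuous on the closed unit disk, holomorphic on the open unit disk, injective on the closed unit disk, mapping the open unit disk onto Ω₋ and the unit circle onto Γ_{p,1}. Let φ₊ : ℂ → ℂ be continuous on {|z| ≥ 1}, holomorphic on {|z| > 1}, injective on {|z| ≥ 1}, mapping {|z| > 1} onto Ω₊ = {z : |p(z)| > 1} and the unit circle onto Γ_{p,1}, with φ₊(z)/z → λ for some λ > 0 as |z| → ∞. Let k : ℂ → ℂ satisfy |k(z)| = 1 and φ₊(k(z)) = φ₋(z) for all |z| = 1, and let a₁, …, a_n be the points of the open unit disk with φ₋(a_k) = ζ_k. Then there exists θ ∈ ℝ such that for all z with |z| = 1: k(z)^n = e^{iθ} · ∏_{k=1}^{n} (z − a_k)/(1 − conj(a_k)·z). -/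
/-!
On the unit circle, `p ∘ φ₊` equals `zⁿ` and `p ∘ φ₋` is a unimodular multiple of the Blaschke
product with zeros `aₖ`; since `φ₊ ∘ k = φ₋` there, `kⁿ = p ∘ φ₊ ∘ k = p ∘ φ₋`. Both identities
come from one principle: a zero-free holomorphic function on the disk, continuous up to the
boundary with unimodular boundary values, is a unimodular constant (maximum principle for `f` and
`1 / f`). It is applied to `z ↦ zⁿ p(φ₊(1 / z))`, whose value at `0` is `λⁿ` by the normalization
of `φ₊` at `∞` (so the constant is the positive unimodular number `λⁿ = 1`), and to `p ∘ φ₋`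
divided by the Blaschke product. The latter quotient is zero-free because `φ₋` is injective,
hence has nonvanishing derivative, so each `aₖ` is a simple zero of `φ₋ - ζₖ`.
-/

open Metric Set Filter Function Topology ComplexConjugate

namespace Complex

theorem eqOn_closure_of_norm_eq_one_on_frontier {f : ℂ → ℂ} {U : Set ℂ}
    (hb : Bornology.IsBounded U) (hc : IsPreconnected U) (ho : IsOpen U)
    (hf : DiffContOnCl ℂ f U) (h0 : ∀ z ∈ U, f z ≠ 0) (h1 : ∀ z ∈ frontier U, ‖f z‖ = 1)
    {z₀ : ℂ} (hz₀ : z₀ ∈ U) : EqOn f (const ℂ (f z₀)) (closure U) := by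
  have hne : ∀ z ∈ closure U, f z ≠ 0 := by
    rw [closure_eq_self_union_frontier]
    rintro z (hz | hz) hfz
    · exact h0 z hz hfz
    · simpa [hfz] using h1 z hz
  have hle : ∀ z ∈ closure U, ‖f z‖ ≤ 1 := fun z hz =>
    norm_le_of_forall_mem_frontier_norm_le hb hf (fun w hw => (h1 w hw).le) hz
  have hge : 1 ≤ ‖f z₀‖ := by
    have := norm_le_of_forall_mem_frontier_norm_le hb (hf.inv hne) (C := 1)
      (fun w hw => by simp [h1 w hw]) (subset_closure hz₀)
    rwa [Pi.inv_apply, norm_inv, inv_le_one₀ (norm_pos_iff.mpr (h0 z₀ hz₀))] at this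
  exact eqOn_closure_of_isPreconnected_of_isMaxOn_norm hc ho hf hz₀ fun z hz =>
    (hle z (subset_closure hz)).trans hge

theorem _root_.AnalyticAt.exists_analyticAt_pow_eq {g : ℂ → ℂ} {c : ℂ} (hg : AnalyticAt ℂ g c)
    (hgc : g c ≠ 0) {m : ℕ} (hm : m ≠ 0) :
    ∃ ψ : ℂ → ℂ, AnalyticAt ℂ ψ c ∧ ∀ z, ψ z ^ m = g z := by
  obtain ⟨r, hr⟩ := IsAlgClosed.exists_pow_nat_eq (g c) (Nat.pos_of_ne_zero hm)
  refine ⟨fun z => r * (g z / g c) ^ (m⁻¹ : ℂ), ?_, fun z => ?_⟩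
  · refine analyticAt_const.mul ((hg.div analyticAt_const hgc).cpow analyticAt_const ?_)
    simp [hgc]
  · rw [mul_pow, cpow_nat_inv_pow _ hm, hr, mul_div_cancel₀ _ hgc]

theorem not_injOn_of_eventually_eq_pow {F w : ℂ → ℂ} {c r : ℂ} {m : ℕ}
    (hw : HasStrictDerivAt w r c) (hr : r ≠ 0) (hwc : w c = 0) (hm : 2 ≤ m)
    (hF : ∀ᶠ z in 𝓝 c, F z = w z ^ m) {U : Set ℂ} (hU : U ∈ 𝓝 c) : ¬ InjOn F U := by
  intro hinj
  set ω := exp (2 * Real.pi * I / m)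
  have hω : IsPrimitiveRoot ω m := isPrimitiveRoot_exp m (by omega)
  have himg : ∀ᶠ y in 𝓝 0, y ∈ w '' {z ∈ U | F z = w z ^ m} := by
    rw [← hwc, ← hw.map_nhds_eq hr]
    exact image_mem_map (inter_mem hU hF)
  have hrot : Tendsto (ω * ·) (𝓝 0) (𝓝 0) := by
    simpa using (continuous_const_mul ω).tendsto 0
  obtain ⟨y, ⟨⟨z₁, ⟨hz₁, hF₁⟩, rfl⟩, ⟨z₂, ⟨hz₂, hF₂⟩, hwz₂⟩⟩, hy⟩ :=
    (((himg.and (hrot.eventually himg)).filter_mono nhdsWithin_le_nhds).and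
      (self_mem_nhdsWithin (s := {(0 : ℂ)}ᶜ))).exists
  have hz : z₁ = z₂ := hinj hz₁ hz₂ (by rw [hF₁, hF₂, hwz₂, mul_pow, hω.pow_eq_one, one_mul])
  have : (ω - 1) * w z₁ = 0 := by rw [sub_one_mul, ← hwz₂, hz, sub_self]
  exact (mul_ne_zero (sub_ne_zero.mpr (hω.ne_one (by omega))) hy) this

theorem _root_.AnalyticAt.deriv_ne_zero_of_injOn {f : ℂ → ℂ} {c : ℂ} (hf : AnalyticAt ℂ f c)
    {U : Set ℂ} (hU : U ∈ 𝓝 c) (hinj : InjOn f U) : deriv f c ≠ 0 := by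
  intro hderiv
  set F : ℂ → ℂ := fun z => f z - f c
  have hFa : AnalyticAt ℂ F c := hf.sub analyticAt_const
  have hFinj : InjOn F U := fun x hx y hy h => hinj hx hy (sub_left_inj.mp h)
  have hF_ne_top : analyticOrderAt F c ≠ ⊤ := by
    intro htop
    obtain ⟨z, ⟨hFz, hzU⟩, hzc⟩ := (((analyticOrderAt_eq_top.mp htop).and hU).filter_mono
      nhdsWithin_le_nhds |>.and (self_mem_nhdsWithin (s := {c}ᶜ))).exists
    exact hzc (hFinj hzU (mem_of_mem_nhds hU) (by simpa [F] using hFz))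
  obtain ⟨g, hg, hgc, hFg⟩ := hFa.analyticOrderAt_ne_top.mp hF_ne_top
  set m := analyticOrderNatAt F c
  have hm : 2 ≤ m := by
    have hd : analyticOrderAt (deriv f) c ≠ 0 := by
      simp [analyticOrderAt_eq_zero, hderiv, hf.deriv]
    have := hf.analyticOrderAt_deriv_add_one
    rw [← Nat.cast_analyticOrderNatAt hF_ne_top] at this
    have h2 : ((2 : ℕ) : ℕ∞) ≤ m := by
      rw [← this, Nat.cast_ofNat, ← one_add_one_eq_two]
      gcongr
      exact Order.one_le_iff_ne_zero.mpr hd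
    exact_mod_cast h2
  obtain ⟨ψ, hψ, hψg⟩ := hg.exists_analyticAt_pow_eq hgc (m := m) (by omega)
  set w : ℂ → ℂ := fun z => (z - c) * ψ z
  have hw : HasStrictDerivAt w (ψ c) c := by
    have hwa : AnalyticAt ℂ w c := (analyticAt_id.sub analyticAt_const).mul hψ
    have hd : HasDerivAt w (ψ c) c := by
      have := ((hasDerivAt_id c).sub_const c).mul hψ.differentiableAt.hasDerivAt
      rwa [one_mul, id, sub_self, zero_mul, add_zero] at this
    exact hd.deriv ▸ hwa.hasStrictDerivAt
  have hψc : ψ c ≠ 0 := fun h => hgc (by rw [← hψg, h, zero_pow (by omega)])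
  refine not_injOn_of_eventually_eq_pow hw hψc (by simp [w]) hm ?_ hU hFinj
  filter_upwards [hFg] with z hz
  rw [hz, smul_eq_mul, ← hψg, mul_pow]

theorem dslope_ne_zero_of_injOn {f : ℂ → ℂ} {U : Set ℂ} (hU : IsOpen U)
    (hf : DifferentiableOn ℂ f U) (hinj : InjOn f U) {a z : ℂ} (ha : a ∈ U) (hz : z ∈ U) :
    dslope f a z ≠ 0 := by
  rcases eq_or_ne z a with rfl | hza
  · rw [dslope_same]
    exact (hf.analyticAt (hU.mem_nhds hz)).deriv_ne_zero_of_injOn (hU.mem_nhds hz) hinj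
  · rw [dslope_of_ne _ hza, slope_def_field]
    exact div_ne_zero (sub_ne_zero.mpr fun h => hza (hinj hz ha h)) (sub_ne_zero.mpr hza)

theorem norm_one_sub_conj_mul_eq_norm_sub {a z : ℂ} (hz : ‖z‖ = 1) :
    ‖1 - conj a * z‖ = ‖z - a‖ := by
  have hzz : z * conj z = 1 := by rw [mul_conj', hz]; simp
  calc ‖1 - conj a * z‖ = ‖z * conj (z - a)‖ := by rw [map_sub, mul_sub, hzz, mul_comm z]
    _ = ‖z - a‖ := by rw [norm_mul, hz, one_mul, norm_conj]

theorem one_sub_conj_mul_ne_zero {a z : ℂ} (ha : ‖a‖ < 1) (hz : ‖z‖ ≤ 1) :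
    1 - conj a * z ≠ 0 := by
  have : ‖conj a * z‖ < 1 := by
    rw [norm_mul, norm_conj]
    nlinarith [norm_nonneg a, norm_nonneg z]
  exact sub_ne_zero.mpr fun h => by simp [← h] at this

theorem exists_prod_sub_eq_mul_blaschke {n : ℕ} (ζ : Fin n → ℂ) {φ : ℂ → ℂ}
    (hcont : ContinuousOn φ (closedBall 0 1)) (hdiff : DifferentiableOn ℂ φ (ball 0 1))
    (hinj : InjOn φ (ball 0 1)) (hbdry : ∀ z ∈ sphere (0 : ℂ) 1, ‖∏ i, (φ z - ζ i)‖ = 1)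
    (a : Fin n → ℂ) (ha : ∀ i, a i ∈ ball (0 : ℂ) 1) (hφa : ∀ i, φ (a i) = ζ i) :
    ∃ c : ℂ, ‖c‖ = 1 ∧ ∀ z ∈ sphere (0 : ℂ) 1,
      ∏ i, (φ z - ζ i) = c * ∏ i, (z - a i) / (1 - conj (a i) * z) := by
  set h : ℂ → ℂ := fun z => ∏ i, dslope φ (a i) z * (1 - conj (a i) * z)
  have hden : ∀ i, ∀ z ∈ closedBall (0 : ℂ) 1, 1 - conj (a i) * z ≠ 0 := fun i z hz =>
    one_sub_conj_mul_ne_zero (mem_ball_zero_iff.mp (ha i)) (mem_closedBall_zero_iff.mp hz)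
  have hfactor : ∀ z ∈ closedBall (0 : ℂ) 1,
      ∏ i, (φ z - ζ i) = (∏ i, (z - a i) / (1 - conj (a i) * z)) * h z := by
    intro z hz
    rw [← Finset.prod_mul_distrib]
    refine Finset.prod_congr rfl fun i _ => ?_
    rw [← hφa i, ← sub_smul_dslope, smul_eq_mul, mul_comm (dslope _ _ _), ← mul_assoc,
      div_mul_cancel₀ _ (hden i z hz)]
  have hh : DiffContOnCl ℂ h (ball 0 1) := by
    refine ⟨DifferentiableOn.fun_finsetProd fun i _ => ?_, ?_⟩
    · exact ((differentiableOn_dslope (isOpen_ball.mem_nhds (ha i))).mpr hdiff).mul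
        (by fun_prop)
    · rw [closure_ball 0 one_ne_zero]
      refine continuousOn_finsetProd _ fun i _ => ?_
      exact ((continuousOn_dslope (closedBall_mem_nhds_of_mem (ha i))).mpr
        ⟨hcont, hdiff.differentiableAt (isOpen_ball.mem_nhds (ha i))⟩).mul (by fun_prop)
  have hh0 : ∀ z ∈ ball (0 : ℂ) 1, h z ≠ 0 := fun z hz =>
    Finset.prod_ne_zero_iff.mpr fun i _ =>
      mul_ne_zero (dslope_ne_zero_of_injOn isOpen_ball hdiff hinj (ha i) hz)
        (hden i z (ball_subset_closedBall hz))
  have hh1 : ∀ z ∈ sphere (0 : ℂ) 1, ‖h z‖ = 1 := by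
    intro z hz
    have hz1 : ‖z‖ = 1 := mem_sphere_zero_iff_norm.mp hz
    have hB : ‖∏ i, (z - a i) / (1 - conj (a i) * z)‖ = 1 := by
      refine (norm_prod _ _).trans (Finset.prod_eq_one fun i _ => ?_)
      have hza : z - a i ≠ 0 :=
        sub_ne_zero.mpr fun h => (mem_ball_zero_iff.mp (ha i)).ne (h ▸ hz1)
      rw [norm_div, norm_one_sub_conj_mul_eq_norm_sub hz1, div_self (norm_ne_zero_iff.mpr hza)]
    rw [← hbdry z hz, hfactor z (sphere_subset_closedBall hz), norm_mul, hB, one_mul]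
  have hconst := eqOn_closure_of_norm_eq_one_on_frontier isBounded_ball
    (convex_ball 0 1).isPreconnected isOpen_ball hh hh0
    (by rwa [frontier_ball 0 one_ne_zero]) (mem_ball_self one_pos)
  rw [closure_ball 0 one_ne_zero] at hconst
  have h1 : (1 : ℂ) ∈ sphere (0 : ℂ) 1 := by simp
  refine ⟨h 0, ?_, fun z hz => ?_⟩
  · rw [← hh1 1 h1, hconst (sphere_subset_closedBall h1), const_apply]
  · rw [hfactor z (sphere_subset_closedBall hz), hconst (sphere_subset_closedBall hz), mul_comm]
    rfl

theorem tendsto_prod_sub_comp_inv_mul_pow {n : ℕ} (ζ : Fin n → ℂ) {φ : ℂ → ℂ} {L : ℂ}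
    (hlim : Tendsto (fun z => φ z / z) (Bornology.cobounded ℂ) (𝓝 L)) :
    Tendsto (fun z => (∏ i, (φ z⁻¹ - ζ i)) * z ^ n) (𝓝[≠] 0) (𝓝 (L ^ n)) := by
  have hφ : Tendsto (fun z => φ z⁻¹ * z) (𝓝[≠] 0) (𝓝 L) := by
    refine (hlim.comp tendsto_inv₀_nhdsNE_zero).congr fun z => ?_
    simp [div_eq_mul_inv]
  have hz : Tendsto (fun z : ℂ => z) (𝓝[≠] 0) (𝓝 0) := tendsto_id.mono_left nhdsWithin_le_nhds
  have := tendsto_finsetProd Finset.univ fun i _ => hφ.sub (hz.const_mul (ζ i))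
  simp only [mul_zero, sub_zero, ← sub_mul, Finset.prod_const, Finset.card_univ,
    Fintype.card_fin] at this
  simpa only [← Finset.prod_mul_pow_card, Finset.card_univ, Fintype.card_fin] using this

theorem diffContOnCl_update_comp_inv {q : ℂ → ℂ} {L : ℂ}
    (hcont : ContinuousOn q {z | 1 ≤ ‖z‖}) (hdiff : DifferentiableOn ℂ q {z | 1 < ‖z‖})
    (hlim : Tendsto (fun z => q z⁻¹) (𝓝[≠] 0) (𝓝 L)) :
    DiffContOnCl ℂ (update (fun z => q z⁻¹) 0 L) (ball 0 1) := by
  have hq : EqOn (update (fun z => q z⁻¹) 0 L) (fun z => q z⁻¹) {0}ᶜ :=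
    fun z hz => update_of_ne hz _ _
  refine ⟨(differentiableOn_compl_singleton_and_continuousAt_iff (ball_mem_nhds 0 one_pos)).mp
    ⟨?_, continuousAt_update_same.mpr hlim⟩, ?_⟩
  · refine (hdiff.comp (differentiableOn_inv.mono fun z hz => hz.2) fun z hz => ?_).congr
      fun z hz => hq hz.2
    rw [mem_ofPred_eq, norm_inv]
    exact (one_lt_inv₀ (norm_pos_iff.mpr hz.2)).mpr (mem_ball_zero_iff.mp hz.1)
  · rw [closure_ball 0 one_ne_zero, continuousOn_update_iff]
    refine ⟨hcont.comp (continuousOn_inv₀.mono fun z hz => hz.2) fun z hz => ?_,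
      fun _ => hlim.mono_left (nhdsWithin_mono _ fun z hz => hz.2)⟩
    rw [mem_ofPred_eq, norm_inv]
    exact (one_le_inv₀ (norm_pos_iff.mpr hz.2)).mpr (mem_closedBall_zero_iff.mp hz.1)

theorem prod_sub_eq_pow_of_tendsto_div {n : ℕ} (ζ : Fin n → ℂ) {φ : ℂ → ℂ}
    (hcont : ContinuousOn φ {z | 1 ≤ ‖z‖}) (hdiff : DifferentiableOn ℂ φ {z | 1 < ‖z‖})
    (hne : ∀ z, 1 < ‖z‖ → ∏ i, (φ z - ζ i) ≠ 0)
    (hbdry : ∀ z ∈ sphere (0 : ℂ) 1, ‖∏ i, (φ z - ζ i)‖ = 1) {l : ℝ} (hl : 0 < l)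
    (hlim : Tendsto (fun z => φ z / z) (Bornology.cobounded ℂ) (𝓝 l)) :
    ∀ w ∈ sphere (0 : ℂ) 1, ∏ i, (φ w - ζ i) = w ^ n := by
  set q : ℂ → ℂ := fun w => (∏ i, (φ w - ζ i)) * w⁻¹ ^ n
  have hq_inv : ∀ z, q z⁻¹ = (∏ i, (φ z⁻¹ - ζ i)) * z ^ n := by simp [q]
  set G := update (fun z => q z⁻¹) 0 ((l : ℂ) ^ n)
  have hG_zero : G 0 = (l : ℂ) ^ n := update_self ..
  have hG_of_ne : ∀ z ≠ 0, G z = (∏ i, (φ z⁻¹ - ζ i)) * z ^ n := fun z hz => by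
    rw [show G z = q z⁻¹ from update_of_ne hz _ _, hq_inv]
  have hlimG : Tendsto (fun z => q z⁻¹) (𝓝[≠] 0) (𝓝 ((l : ℂ) ^ n)) := by
    simpa only [hq_inv] using tendsto_prod_sub_comp_inv_mul_pow ζ hlim
  have hG : DiffContOnCl ℂ G (ball 0 1) := by
    refine diffContOnCl_update_comp_inv ?_ ?_ hlimG
    · exact (continuousOn_finsetProd _ fun i _ => hcont.sub continuousOn_const).mul
        ((continuousOn_inv₀.mono fun z hz => norm_pos_iff.mp (one_pos.trans_le hz)).pow n)
    · exact (DifferentiableOn.fun_finsetProd fun i _ => hdiff.sub (differentiableOn_const _)).mul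
        ((differentiableOn_inv.mono fun z hz => show z ≠ 0 from
          norm_pos_iff.mp (one_pos.trans hz)).pow n)
  have hG0 : ∀ z ∈ ball (0 : ℂ) 1, G z ≠ 0 := by
    intro z hz
    rcases eq_or_ne z 0 with rfl | hz0
    · rw [hG_zero]
      exact pow_ne_zero n (ofReal_ne_zero.mpr hl.ne')
    · rw [hG_of_ne z hz0]
      refine mul_ne_zero (hne _ ?_) (pow_ne_zero n hz0)
      rw [norm_inv]
      exact (one_lt_inv₀ (norm_pos_iff.mpr hz0)).mpr (mem_ball_zero_iff.mp hz)
  have hG1 : ∀ z ∈ sphere (0 : ℂ) 1, ‖G z‖ = 1 := by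
    intro z hz
    have hz1 : ‖z‖ = 1 := mem_sphere_zero_iff_norm.mp hz
    rw [hG_of_ne z (ne_zero_of_mem_unit_sphere ⟨z, hz⟩), norm_mul,
      hbdry _ (by simpa using hz1), norm_pow, hz1, one_pow, one_mul]
  have hconst := eqOn_closure_of_norm_eq_one_on_frontier isBounded_ball
    (convex_ball 0 1).isPreconnected isOpen_ball hG hG0
    (by rwa [frontier_ball 0 one_ne_zero]) (mem_ball_self one_pos)
  rw [closure_ball 0 one_ne_zero] at hconst
  have hln : (l : ℂ) ^ n = 1 := by
    have h1 : (1 : ℂ) ∈ sphere (0 : ℂ) 1 := by simp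
    have := hG1 1 h1
    rw [hconst (sphere_subset_closedBall h1), const_apply, hG_zero, norm_pow, norm_real,
      Real.norm_of_nonneg hl.le] at this
    exact_mod_cast this
  intro w hw
  have hw0 : w ≠ 0 := ne_zero_of_mem_unit_sphere ⟨w, hw⟩
  have := hconst (x := w⁻¹)
    (by rw [mem_closedBall_zero_iff, norm_inv, mem_sphere_zero_iff_norm.mp hw, inv_one])
  rw [hG_of_ne _ (inv_ne_zero hw0), const_apply, hG_zero, hln, inv_inv, inv_pow] at this
  exact (mul_inv_eq_one₀ (pow_ne_zero n hw0)).mp this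

end Complex

open Polynomial in
theorem fingerprint_of_proper_lemniscate_general
    (n : ℕ) (ζ : Fin n → ℂ) (p : Polynomial ℂ)
    (hp : p = ∏ i : Fin n, (X - C (ζ i)))
    (φm : ℂ → ℂ)
    (hφmcont : ContinuousOn φm (Metric.closedBall (0 : ℂ) 1))
    (hφmdiff : DifferentiableOn ℂ φm (Metric.ball (0 : ℂ) 1))
    (hφminj : Set.InjOn φm (Metric.closedBall (0 : ℂ) 1))
    (hφmbdry : φm '' Metric.sphere (0 : ℂ) 1 = {z : ℂ | ‖p.eval z‖ = 1})
    (φp : ℂ → ℂ)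
    (hφpcont : ContinuousOn φp {z : ℂ | 1 ≤ ‖z‖})
    (hφpdiff : DifferentiableOn ℂ φp {z : ℂ | 1 < ‖z‖})
    (hφpim : φp '' {z : ℂ | 1 < ‖z‖} = {z : ℂ | 1 < ‖p.eval z‖})
    (hφpbdry : φp '' Metric.sphere (0 : ℂ) 1 = {z : ℂ | ‖p.eval z‖ = 1})
    (l : ℝ) (hl : 0 < l)
    (hφpnorm : Filter.Tendsto (fun z : ℂ => φp z / z)
      (Filter.comap (‖·‖) Filter.atTop) (nhds (l : ℂ)))
    (k : ℂ → ℂ)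
    (hk : ∀ z : ℂ, ‖z‖ = 1 → ‖k z‖ = 1 ∧ φp (k z) = φm z)
    (a : Fin n → ℂ) (ha : ∀ i, a i ∈ Metric.ball (0 : ℂ) 1)
    (hφa : ∀ i, φm (a i) = ζ i) :
    ∃ θ : ℝ, ∀ z : ℂ, ‖z‖ = 1 →
      (k z) ^ n = Complex.exp (θ * Complex.I) *
        ∏ i : Fin n, (z - a i) / (1 - (starRingEnd ℂ) (a i) * z) := by
  have hpeval : ∀ w, p.eval w = ∏ i, (w - ζ i) := fun w => by simp [hp, eval_prod]
  have hΓ : ∀ {φ : ℂ → ℂ}, φ '' sphere 0 1 = {z | ‖p.eval z‖ = 1} →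
      ∀ z ∈ sphere (0 : ℂ) 1, ‖∏ i, (φ z - ζ i)‖ = 1 := fun hφ z hz => by
    rw [← hpeval]
    exact (hφ ▸ mem_image_of_mem _ hz :)
  have hΩp : ∀ z : ℂ, 1 < ‖z‖ → ∏ i, (φp z - ζ i) ≠ 0 := fun z hz => by
    rw [← hpeval, ← norm_pos_iff]
    have : φp z ∈ {w : ℂ | 1 < ‖p.eval w‖} := hφpim ▸ mem_image_of_mem _ hz
    exact one_pos.trans this
  obtain ⟨c, hc, hφm_eq⟩ := Complex.exists_prod_sub_eq_mul_blaschke ζ hφmcont hφmdiff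
    (hφminj.mono ball_subset_closedBall) (hΓ hφmbdry) a ha hφa
  have hφp_eq := Complex.prod_sub_eq_pow_of_tendsto_div ζ hφpcont hφpdiff hΩp (hΓ hφpbdry) hl
    (by rwa [← comap_norm_atTop])
  refine ⟨Complex.arg c, fun z hz => ?_⟩
  obtain ⟨hkz, hφk⟩ := hk z hz
  rw [← hφp_eq (k z) (mem_sphere_zero_iff_norm.mpr hkz), hφk,
    hφm_eq z (mem_sphere_zero_iff_norm.mpr hz)]
  congr
  simpa [hc] using (Complex.norm_mul_exp_arg_mul_I c).symm

open Polynomial in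
/-- Ebenfelt–Khavinson–Shapiro: the fingerprint `k = φ₊⁻¹ ∘ φ₋` of a proper
polynomial lemniscate `Γ_{p,1}` of degree `n`, `p = ∏ (z − ζₖ)`, satisfies
`k(z)ⁿ = e^{iθ} ∏ₖ (z − aₖ)/(1 − conj(aₖ) z)` on the unit circle, where
`aₖ = φ₋⁻¹(ζₖ)`. -/
theorem fingerprint_of_proper_lemniscate
    (n : ℕ) (hn : 1 ≤ n) (ζ : Fin n → ℂ) (p : Polynomial ℂ)
    (hp : p = ∏ i : Fin n, (X - C (ζ i)))
    (hsmooth : ∀ z : ℂ, ‖p.eval z‖ = 1 → p.derivative.eval z ≠ 0)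
    (hconn : IsConnected {z : ℂ | ‖p.eval z‖ = 1})
    (φm : ℂ → ℂ)
    (hφmcont : ContinuousOn φm (Metric.closedBall (0 : ℂ) 1))
    (hφmdiff : DifferentiableOn ℂ φm (Metric.ball (0 : ℂ) 1))
    (hφminj : Set.InjOn φm (Metric.closedBall (0 : ℂ) 1))
    (hφmim : φm '' Metric.ball (0 : ℂ) 1 = {z : ℂ | ‖p.eval z‖ < 1})
    (hφmbdry : φm '' Metric.sphere (0 : ℂ) 1 = {z : ℂ | ‖p.eval z‖ = 1})
    (φp : ℂ → ℂ)
    (hφpcont : ContinuousOn φp {z : ℂ | 1 ≤ ‖z‖})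
    (hφpdiff : DifferentiableOn ℂ φp {z : ℂ | 1 < ‖z‖})
    (hφpinj : Set.InjOn φp {z : ℂ | 1 ≤ ‖z‖})
    (hφpim : φp '' {z : ℂ | 1 < ‖z‖} = {z : ℂ | 1 < ‖p.eval z‖})
    (hφpbdry : φp '' Metric.sphere (0 : ℂ) 1 = {z : ℂ | ‖p.eval z‖ = 1})
    (l : ℝ) (hl : 0 < l)
    (hφpnorm : Filter.Tendsto (fun z : ℂ => φp z / z)
      (Filter.comap (‖·‖) Filter.atTop) (nhds (l : ℂ)))
    (k : ℂ → ℂ)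
    (hk : ∀ z : ℂ, ‖z‖ = 1 → ‖k z‖ = 1 ∧ φp (k z) = φm z)
    (a : Fin n → ℂ) (ha : ∀ i, a i ∈ Metric.ball (0 : ℂ) 1)
    (hφa : ∀ i, φm (a i) = ζ i) :
    ∃ θ : ℝ, ∀ z : ℂ, ‖z‖ = 1 →
      (k z) ^ n = Complex.exp (θ * Complex.I) *
        ∏ i : Fin n, (z - a i) / (1 - (starRingEnd ℂ) (a i) * z) :=
  fingerprint_of_proper_lemniscate_general n ζ p hp φm hφmcont hφmdiff hφminj hφmbdry φp hφpcont
    hφpdiff hφpim hφpbdry l hl hφpnorm k hk a ha hφa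
end
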